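/- arXiv:2403.10656 — 5 statements merged into one kernel-verified Lean document; each statement's English description precedes it below -/
import Mathlib

section
/- Let X and Y be finite alphabets, let μ be a strictly positive probability distribution on X, and let K be a Markov kernel (row-stochastic matrix) from X to Y such that the output distribution μK is strictly positive on Y. Fix α with 1 < α < ∞. Then the strong data processing constant for Rényi divergence satisfies η_α(μ, K) ≥ η_{χ²}(μ, K). -/
open scoped BigOperators
open Filter Topology Set

noncomputable section

section Defs

variable {X Y : Type*} [Fintype X] [Fintype Y]

/-- `μ` is a probability distribution on the finite alphabet `X`. -/
def IsProbDist (μ : X → ℝ) : Prop := (∀ x, 0 ≤ μ x) ∧ ∑ x, μ x = 1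

/-- `K` is a Markov kernel (row-stochastic matrix) from `X` to `Y`. -/
def IsKernel (K : X → Y → ℝ) : Prop := (∀ x y, 0 ≤ K x y) ∧ ∀ x, ∑ y, K x y = 1

/-- Action of the kernel on a distribution: `(μK)(y) = ∑ₓ μ(x) K(y|x)`. -/
def push (μ : X → ℝ) (K : X → Y → ℝ) (y : Y) : ℝ := ∑ x, μ x * K x y

/-- Rényi divergence of order `α`: `D_α(ν‖μ) = (α-1)⁻¹ log ∑ₓ μ(x) (ν(x)/μ(x))^α`. -/
def renyiD (α : ℝ) (ν μ : X → ℝ) : ℝ :=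
  (α - 1)⁻¹ * Real.log (∑ x, μ x * (ν x / μ x) ^ α)

/-- χ²-divergence: `χ²(ν‖μ) = ∑ₓ (ν(x) - μ(x))²/μ(x)`. -/
def chiSq (ν μ : X → ℝ) : ℝ := ∑ x, (ν x - μ x) ^ 2 / μ x

/-- SDPI constant of the Rényi divergence of order `α` for the pair `(μ, K)`. -/
def etaAlpha (α : ℝ) (μ : X → ℝ) (K : X → Y → ℝ) : ℝ :=
  sSup {r : ℝ | ∃ ν : X → ℝ, IsProbDist ν ∧ ν ≠ μ ∧
    r = renyiD α (push ν K) (push μ K) / renyiD α ν μ}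

/-- SDPI constant of the χ²-divergence for the pair `(μ, K)`. -/
def etaChi (μ : X → ℝ) (K : X → Y → ℝ) : ℝ :=
  sSup {r : ℝ | ∃ ν : X → ℝ, IsProbDist ν ∧ ν ≠ μ ∧
    r = chiSq (push ν K) (push μ K) / chiSq ν μ}

end Defs

/-! ### Auxiliary lemmas -/

/-- Second-order Taylor limit: `((1+u)^α - 1 - αu)/u² → α(α-1)/2` as `u → 0`. -/
lemma aux_rpow_second_order {α : ℝ} :
    Tendsto (fun u : ℝ => ((1+u)^α - 1 - α*u)/u^2) (𝓝[≠] (0:ℝ)) (𝓝 (α*(α-1)/2)) := by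
  have hmem : {u : ℝ | 1 + u > 0} ∈ 𝓝 (0:ℝ) := by
    have : IsOpen {u : ℝ | 1 + u > 0} := isOpen_lt continuous_const (by continuity)
    exact this.mem_nhds (by simp)
  have hder : ∀ u : ℝ, 1 + u > 0 →
      HasDerivAt (fun u : ℝ => (1+u)^α - 1 - α*u) (α*(1+u)^(α-1) - α) u := by
    intro u hu
    have h1 : HasDerivAt (fun u : ℝ => 1 + u) 1 u := (hasDerivAt_id u).const_add 1
    have h2 : HasDerivAt (fun u : ℝ => (1+u)^α) (α*(1+u)^(α-1)) u := by
      have := (Real.hasDerivAt_rpow_const (p := α) (Or.inl (ne_of_gt hu))).comp u h1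
      simpa [mul_comm, Function.comp_def] using this
    simpa [Pi.sub_def] using (h2.sub_const 1).sub ((hasDerivAt_id u).const_mul α)
  have hF : HasDerivAt (fun u : ℝ => α * (1+u)^(α-1)) (α*(α-1)) 0 := by
    have h1 : HasDerivAt (fun u : ℝ => 1 + u) 1 (0:ℝ) := (hasDerivAt_id 0).const_add 1
    have h2 : HasDerivAt (fun u : ℝ => (1+u)^(α-1)) ((α-1)) (0:ℝ) := by
      have h3 : (1:ℝ) + 0 ≠ 0 := by norm_num
      have := (Real.hasDerivAt_rpow_const (x := (1:ℝ)+0) (p := α-1) (Or.inl h3)).comp (0:ℝ) h1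
      simpa [Function.comp_def] using this
    simpa [mul_comm] using h2.const_mul α
  have hslope := hasDerivAt_iff_tendsto_slope.mp hF
  apply HasDerivAt.lhopital_zero_nhdsNE (f' := fun u => α*(1+u)^(α-1) - α) (g' := fun u => 2*u)
  · exact eventually_nhdsWithin_of_eventually_nhds
      (Filter.mem_of_superset hmem fun u hu => hder u hu)
  · filter_upwards with u
    simpa [two_mul] using (hasDerivAt_pow 2 u)
  · filter_upwards [self_mem_nhdsWithin] with u hu
    simpa using hu
  · have hc : ContinuousAt (fun u : ℝ => (1+u)^α - 1 - α*u) 0 := by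
      have : ContinuousAt (fun u : ℝ => (1+u)^α) 0 :=
        ContinuousAt.rpow_const (continuousAt_const.add continuousAt_id) (Or.inl (by norm_num))
      exact (this.sub continuousAt_const).sub (continuousAt_const.mul continuousAt_id)
    have := hc.tendsto
    beta_reduce at this
    have h0 : ((1:ℝ)+0)^α - 1 - α*0 = 0 := by norm_num
    rw [h0] at this
    exact this.mono_left nhdsWithin_le_nhds
  · have : Tendsto (fun u : ℝ => u^2) (𝓝 0) (𝓝 0) := by
      simpa using ((continuous_pow 2).tendsto (0:ℝ))
    exact this.mono_left nhdsWithin_le_nhds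
  · have key : Tendsto (fun u : ℝ => slope (fun u : ℝ => α * (1+u)^(α-1)) 0 u / 2)
        (𝓝[≠] (0:ℝ)) (𝓝 (α*(α-1)/2)) := hslope.div_const 2
    apply key.congr
    intro u
    simp only [slope_def_field]
    rw [div_div]
    congr 1 <;> simp [Real.one_rpow] <;> ring

/-- Core limit: for a positive probability `m` and a mean-zero nonzero direction `g`,
`log(∑ m(1+tg)^α)/t² → (α(α-1)/2)·∑ m g²` as `t → 0⁺`. -/
lemma aux_log_sum_div_sq_tendsto {X : Type*} [Fintype X] {α : ℝ} (hα : 1 < α)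
    (m g : X → ℝ) (hm : ∀ x, 0 < m x) (hm1 : ∑ x, m x = 1)
    (hsum : ∑ x, m x * g x = 0) (hg : g ≠ 0) :
    Tendsto (fun t => Real.log (∑ x, m x * (1 + t * g x)^α) / t^2) (𝓝[>] (0:ℝ))
      (𝓝 ((α*(α-1)/2) * ∑ x, m x * g x^2)) := by
  classical
  set c₀ : ℝ := α*(α-1)/2 with hc₀
  set φ : ℝ → ℝ := fun u => if u = 0 then c₀ else ((1+u)^α - 1 - α*u)/u^2 with hφ
  set T : ℝ → ℝ := fun t => ∑ x, m x * g x^2 * φ (t * g x) with hT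
  set S : ℝ → ℝ := fun t => ∑ x, m x * (1 + t * g x)^α with hS
  have hφt : Tendsto φ (𝓝[≠] (0:ℝ)) (𝓝 c₀) := by
    apply Tendsto.congr' _ aux_rpow_second_order
    filter_upwards [self_mem_nhdsWithin] with u hu
    have hu' : u ≠ 0 := hu
    simp only [hφ, if_neg hu']
  have hSig : 0 < ∑ x, m x * g x^2 := by
    obtain ⟨x₀, hx₀⟩ : ∃ x, g x ≠ 0 := by
      by_contra h; push_neg at h; exact hg (funext h)
    have h2 : 0 < g x₀^2 := by positivity
    apply Finset.sum_pos' (fun x _ => mul_nonneg (hm x).le (sq_nonneg _))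
    exact ⟨x₀, Finset.mem_univ _, mul_pos (hm x₀) h2⟩
  have hTt : Tendsto T (𝓝[>] (0:ℝ)) (𝓝 (∑ x, m x * g x^2 * c₀)) := by
    apply tendsto_finset_sum
    intro x _
    by_cases hx : g x = 0
    · simpa [hx] using tendsto_const_nhds
    · apply Tendsto.const_mul
      apply hφt.comp
      apply tendsto_nhdsWithin_of_tendsto_nhds_of_eventually_within
      · have h0 : Tendsto (fun t : ℝ => t * g x) (𝓝 0) (𝓝 (0 * g x)) :=
          (continuous_id.mul continuous_const).tendsto 0
        rw [zero_mul] at h0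
        exact h0.mono_left nhdsWithin_le_nhds
      · filter_upwards [self_mem_nhdsWithin] with t ht
        have : t ≠ 0 := ne_of_gt ht
        simp [this, hx]
  have hid : ∀ t : ℝ, t ≠ 0 → S t = 1 + t^2 * T t := by
    intro t ht
    have : ∀ x, m x * (1 + t * g x)^α
        = m x + α * t * (m x * g x) + t^2 * (m x * g x^2 * φ (t * g x)) := by
      intro x
      by_cases hx : g x = 0
      · simp [hx, Real.one_rpow]
      · have htg : t * g x ≠ 0 := mul_ne_zero ht hx
        have : φ (t * g x) = ((1 + t * g x)^α - 1 - α*(t * g x))/(t * g x)^2 := by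
          simp [hφ, if_neg htg]
        rw [this]
        field_simp
        ring
    simp only [hS, this, Finset.sum_add_distrib, ← Finset.mul_sum, hm1, hsum, hT]
    ring
  have hSt : Tendsto S (𝓝[>] (0:ℝ)) (𝓝 1) := by
    have h1 : Tendsto (fun t : ℝ => 1 + t^2 * T t) (𝓝[>] (0:ℝ))
        (𝓝 (1 + 0^2 * (∑ x, m x * g x^2 * c₀))) := by
      apply Tendsto.const_add
      exact Tendsto.mul (((continuous_pow 2).tendsto 0).mono_left nhdsWithin_le_nhds) hTt
    have h2 : (1:ℝ) + 0^2 * (∑ x, m x * g x^2 * c₀) = 1 := by ring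
    rw [h2] at h1
    apply h1.congr'
    filter_upwards [self_mem_nhdsWithin] with t ht
    exact (hid t (ne_of_gt ht)).symm
  have hposlim : 0 < ∑ x, m x * g x^2 * c₀ := by
    rw [← Finset.sum_mul]
    have : 0 < c₀ := by
      have h1 : 0 < α - 1 := by linarith
      have h2 : 0 < α := by linarith
      rw [hc₀]; positivity
    positivity
  have hTev : ∀ᶠ t in 𝓝[>] (0:ℝ), 0 < T t := hTt.eventually (eventually_gt_nhds hposlim)
  have hSgt : ∀ᶠ t in 𝓝[>] (0:ℝ), 1 < S t := by
    filter_upwards [hTev, self_mem_nhdsWithin] with t hTp ht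
    have ht' : (0:ℝ) < t := ht
    rw [hid t (ne_of_gt ht')]
    have := mul_pos (pow_pos ht' 2) hTp
    linarith
  have hlog : Tendsto (slope Real.log 1) (𝓝[≠] (1:ℝ)) (𝓝 1) := by
    have := hasDerivAt_iff_tendsto_slope.mp (Real.hasDerivAt_log one_ne_zero)
    simpa using this
  have hS1 : Tendsto S (𝓝[>] (0:ℝ)) (𝓝[≠] (1:ℝ)) := by
    apply tendsto_nhdsWithin_of_tendsto_nhds_of_eventually_within _ hSt
    filter_upwards [hSgt] with t ht
    exact Set.mem_compl_singleton_iff.mpr (ne_of_gt ht)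
  have hratio : Tendsto (fun t => Real.log (S t) / (S t - 1)) (𝓝[>] (0:ℝ)) (𝓝 1) := by
    apply (hlog.comp hS1).congr
    intro t
    simp [slope_def_field, Real.log_one]
  have hfinal : Tendsto (fun t => (Real.log (S t) / (S t - 1)) * T t) (𝓝[>] (0:ℝ))
      (𝓝 (1 * (∑ x, m x * g x^2 * c₀))) := hratio.mul hTt
  have heq : (1:ℝ) * (∑ x, m x * g x^2 * c₀) = c₀ * ∑ x, m x * g x^2 := by
    rw [one_mul, ← Finset.sum_mul, mul_comm]
  rw [heq] at hfinal
  apply hfinal.congr'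
  filter_upwards [hSgt, self_mem_nhdsWithin] with t h1 ht
  have ht' : (0:ℝ) < t := ht
  have ht0 : t ≠ 0 := ne_of_gt ht'
  have hne : S t - 1 ≠ 0 := sub_ne_zero.mpr (ne_of_gt h1)
  have hTeq : T t = (S t - 1)/t^2 := by
    rw [hid t ht0]; field_simp; ring
  rw [hTeq]
  field_simp
  rfl

/-- Jensen: `∑ m (n/m)^α ≥ 1` for probability vectors `n, m` with `m > 0`. -/
lemma aux_one_le_S {X : Type*} [Fintype X] {α : ℝ} (hα : 1 < α)
    (m n : X → ℝ) (hm : ∀ x, 0 < m x) (hm1 : ∑ x, m x = 1)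
    (hn : ∀ x, 0 ≤ n x) (hn1 : ∑ x, n x = 1) :
    1 ≤ ∑ x, m x * (n x / m x) ^ α := by
  have hJ := (convexOn_rpow (le_of_lt hα)).map_sum_le
      (t := Finset.univ) (w := m) (p := fun x => n x / m x)
      (fun x _ => (hm x).le) hm1 (fun x _ =>
        Set.mem_Ici.mpr (div_nonneg (hn x) (hm x).le))
  have hmean : ∑ x, m x • (n x / m x) = 1 := by
    rw [← hn1]
    apply Finset.sum_congr rfl
    intro x _
    rw [smul_eq_mul, mul_div_cancel₀ _ (ne_of_gt (hm x))]
  rw [hmean] at hJ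
  simpa [Real.one_rpow, smul_eq_mul] using hJ

/-- Data processing at the level of the `α`-power sums. -/
lemma aux_S_push_le {X Y : Type*} [Fintype X] [Fintype Y] {α : ℝ} (hα : 1 < α)
    (μ ν : X → ℝ) (K : X → Y → ℝ) (hμpos : ∀ x, 0 < μ x)
    (hν : ∀ x, 0 ≤ ν x) (hK : IsKernel K) (hout : ∀ y, 0 < push μ K y) :
    ∑ y, push μ K y * (push ν K y / push μ K y) ^ α ≤ ∑ x, μ x * (ν x / μ x) ^ α := by
  have key : ∀ y, push μ K y * (push ν K y / push μ K y) ^ α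
      ≤ ∑ x, μ x * K x y * (ν x / μ x) ^ α := by
    intro y
    set w : X → ℝ := fun x => μ x * K x y / push μ K y with hw
    have hw0 : ∀ x, 0 ≤ w x := fun x =>
      div_nonneg (mul_nonneg (hμpos x).le (hK.1 x y)) (hout y).le
    have hw1 : ∑ x, w x = 1 := by
      rw [hw, ← Finset.sum_div, div_eq_one_iff_eq (ne_of_gt (hout y))]
      rfl
    have hJ := (convexOn_rpow (le_of_lt hα)).map_sum_le
        (t := Finset.univ) (w := w) (p := fun x => ν x / μ x)
        (fun x _ => hw0 x) hw1 (fun x _ =>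
          Set.mem_Ici.mpr (div_nonneg (hν x) (hμpos x).le))
    have hP : push μ K y ≠ 0 := ne_of_gt (hout y)
    have hmean : ∑ x, w x • (ν x / μ x) = push ν K y / push μ K y := by
      rw [push, Finset.sum_div]
      apply Finset.sum_congr rfl
      intro x _
      have hμx : μ x ≠ 0 := ne_of_gt (hμpos x)
      rw [smul_eq_mul, hw]
      field_simp
    rw [hmean] at hJ
    calc push μ K y * (push ν K y / push μ K y) ^ α
        ≤ push μ K y * ∑ x, w x • (ν x / μ x) ^ α :=
          mul_le_mul_of_nonneg_left hJ (hout y).le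
      _ = ∑ x, μ x * K x y * (ν x / μ x) ^ α := by
          rw [Finset.mul_sum]
          apply Finset.sum_congr rfl
          intro x _
          rw [smul_eq_mul, hw]
          field_simp
  calc ∑ y, push μ K y * (push ν K y / push μ K y) ^ α
      ≤ ∑ y, ∑ x, μ x * K x y * (ν x / μ x) ^ α := Finset.sum_le_sum fun y _ => key y
    _ = ∑ x, μ x * (ν x / μ x) ^ α := by
        rw [Finset.sum_comm]
        apply Finset.sum_congr rfl
        intro x _
        have : ∑ y, μ x * K x y * (ν x / μ x) ^ α
            = μ x * (ν x / μ x) ^ α * ∑ y, K x y := by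
          rw [Finset.mul_sum]
          apply Finset.sum_congr rfl
          intro y _
          ring
        rw [this, hK.2 x, mul_one]

/-- Theorem 1 (Lower bound, Version 1): `η_α(μ, K) ≥ η_{χ²}(μ, K)` for `1 < α < ∞`,
for any strictly positive input distribution `μ` whose output `μK` is also
strictly positive. -/
theorem sdpi_renyi_ge_chiSq
    {X Y : Type*} [Fintype X] [Fintype Y]
    (μ : X → ℝ) (K : X → Y → ℝ) (α : ℝ) (hα : 1 < α)
    (hμ : IsProbDist μ) (hμpos : ∀ x, 0 < μ x)
    (hK : IsKernel K) (hout : ∀ y, 0 < push μ K y) :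
    etaChi μ K ≤ etaAlpha α μ K := by
  classical
  obtain ⟨hμ0, hμ1⟩ := hμ
  set A := {r : ℝ | ∃ ν : X → ℝ, IsProbDist ν ∧ ν ≠ μ ∧
    r = renyiD α (push ν K) (push μ K) / renyiD α ν μ} with hA
  -- basic facts about pushforwards
  have hpush_sum : ∀ ν : X → ℝ, (∑ x, ν x = 1) → ∑ y, push ν K y = 1 := by
    intro ν hν1
    simp only [push]
    rw [Finset.sum_comm]
    calc ∑ x, ∑ y, ν x * K x y = ∑ x, ν x * ∑ y, K x y := by
          apply Finset.sum_congr rfl; intro x _; rw [Finset.mul_sum]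
      _ = 1 := by simp only [hK.2, mul_one]; exact hν1
  have hpush_nonneg : ∀ ν : X → ℝ, (∀ x, 0 ≤ ν x) → ∀ y, 0 ≤ push ν K y := by
    intro ν hν y
    exact Finset.sum_nonneg fun x _ => mul_nonneg (hν x) (hK.1 x y)
  have hMout1 : ∑ y, push μ K y = 1 := hpush_sum μ hμ1
  have hαinv : 0 < (α - 1)⁻¹ := inv_pos.mpr (by linarith)
  -- elements of A are in [0,1]
  have elem_prop : ∀ ν : X → ℝ, IsProbDist ν →
      0 ≤ renyiD α ν μ ∧ 0 ≤ renyiD α (push ν K) (push μ K) ∧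
      renyiD α (push ν K) (push μ K) ≤ renyiD α ν μ := by
    intro ν hν
    have h1 : 1 ≤ ∑ x, μ x * (ν x / μ x) ^ α := aux_one_le_S hα μ ν hμpos hμ1 hν.1 hν.2
    have h2 : 1 ≤ ∑ y, push μ K y * (push ν K y / push μ K y) ^ α :=
      aux_one_le_S hα _ _ hout hMout1 (hpush_nonneg ν hν.1) (hpush_sum ν hν.2)
    have h3 := aux_S_push_le hα μ ν K hμpos hν.1 hK hout
    refine ⟨mul_nonneg hαinv.le (Real.log_nonneg h1),
      mul_nonneg hαinv.le (Real.log_nonneg h2), ?_⟩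
    exact mul_le_mul_of_nonneg_left (Real.log_le_log (by linarith) h3) hαinv.le
  have hA_prop : ∀ r ∈ A, 0 ≤ r ∧ r ≤ 1 := by
    rintro r ⟨ν, hν, -, rfl⟩
    obtain ⟨hden, hnum, hle⟩ := elem_prop ν hν
    refine ⟨div_nonneg hnum hden, ?_⟩
    rcases eq_or_lt_of_le hden with h | h
    · rw [← h, div_zero]; exact zero_le_one
    · exact (div_le_one h).mpr hle
  have hbdd : BddAbove A := ⟨1, fun r hr => (hA_prop r hr).2⟩
  have hA0 : 0 ≤ sSup A := Real.sSup_nonneg fun r hr => (hA_prop r hr).1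
  -- main bound
  rw [etaChi, etaAlpha, ← hA]
  apply Real.sSup_le _ hA0
  rintro r ⟨ν, hν, hne, rfl⟩
  by_cases hKeq : push ν K = push μ K
  · have : chiSq (push ν K) (push μ K) = 0 := by
      simp [chiSq, hKeq]
    rw [this, zero_div]
    exact hA0
  -- nondegenerate case
  set f : X → ℝ := fun x => ν x - μ x with hf
  have hfsum : ∑ x, f x = 0 := by
    simp [hf, Finset.sum_sub_distrib, hν.2, hμ1]
  have hfne : ∃ x, f x ≠ 0 := by
    by_contra h
    push_neg at h
    exact hne (funext fun x => by have := h x; simp [hf, sub_eq_zero] at this; exact this)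
  set g : X → ℝ := fun x => f x / μ x with hg
  set G : Y → ℝ := fun y => (push ν K y - push μ K y) / push μ K y with hG
  -- hypotheses of the core limit lemma for the input side
  have hmg : ∀ x, μ x * g x = f x := by
    intro x
    rw [hg, mul_div_cancel₀ _ (ne_of_gt (hμpos x))]
  have hgsum : ∑ x, μ x * g x = 0 := by
    simp only [hmg]; exact hfsum
  have hgne : g ≠ 0 := by
    intro h
    obtain ⟨x, hx⟩ := hfne
    have := congrFun h x
    simp only [hg, Pi.zero_apply, div_eq_zero_iff] at this
    rcases this with h' | h'
    · exact hx h'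
    · exact (ne_of_gt (hμpos x)) h'
  -- hypotheses for the output side
  have hpushf : ∀ y, push f K y = push ν K y - push μ K y := by
    intro y
    simp only [push, hf]
    rw [← Finset.sum_sub_distrib]
    apply Finset.sum_congr rfl
    intro x _
    ring
  have hMG : ∀ y, push μ K y * G y = push ν K y - push μ K y := by
    intro y
    rw [hG, mul_comm, div_mul_cancel₀ _ (ne_of_gt (hout y))]
  have hGsum : ∑ y, push μ K y * G y = 0 := by
    simp only [hMG]
    rw [Finset.sum_sub_distrib, hpush_sum ν hν.2, hMout1, sub_self]
  have hGne : G ≠ 0 := by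
    intro h
    apply hKeq
    funext y
    have := congrFun h y
    simp only [hG, Pi.zero_apply, div_eq_zero_iff] at this
    rcases this with h' | h'
    · linarith [sub_eq_zero.mp h']
    · exact absurd h' (ne_of_gt (hout y))
  -- quadratic sums are the χ² divergences
  have hQX : ∑ x, μ x * g x ^ 2 = chiSq ν μ := by
    rw [chiSq]
    apply Finset.sum_congr rfl
    intro x _
    have hμx : μ x ≠ 0 := ne_of_gt (hμpos x)
    have hgx : g x = (ν x - μ x) / μ x := rfl
    rw [hgx]
    field_simp
  have hQY : ∑ y, push μ K y * G y ^ 2 = chiSq (push ν K) (push μ K) := by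
    rw [chiSq]
    apply Finset.sum_congr rfl
    intro y _
    have hPy : push μ K y ≠ 0 := ne_of_gt (hout y)
    have hGy : G y = (push ν K y - push μ K y) / push μ K y := rfl
    rw [hGy]
    field_simp
  have hχpos : 0 < chiSq ν μ := by
    rw [← hQX]
    obtain ⟨x₀, hx₀⟩ := hfne
    have hg₀ : g x₀ ≠ 0 := by
      have hgx : g x₀ = f x₀ / μ x₀ := rfl
      rw [hgx]
      exact div_ne_zero hx₀ (ne_of_gt (hμpos x₀))
    have h2 : 0 < g x₀ ^ 2 := by positivity
    apply Finset.sum_pos' (fun x _ => mul_nonneg (hμpos x).le (sq_nonneg _))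
    exact ⟨x₀, Finset.mem_univ _, mul_pos (hμpos x₀) h2⟩
  -- the two limits
  have hB1 := aux_log_sum_div_sq_tendsto hα μ g hμpos hμ1 hgsum hgne
  have hB2 := aux_log_sum_div_sq_tendsto hα (push μ K) G hout hMout1 hGsum hGne
  rw [hQX] at hB1
  rw [hQY] at hB2
  set c₀ : ℝ := α * (α - 1) / 2 with hc₀
  have hc₀ne : c₀ ≠ 0 := by
    have h1 : (0:ℝ) < α - 1 := by linarith
    have h2 : (0:ℝ) < α := by linarith
    positivity
  have hdenne : c₀ * chiSq ν μ ≠ 0 := mul_ne_zero hc₀ne (ne_of_gt hχpos)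
  have htend : Tendsto (fun t =>
      (Real.log (∑ y, push μ K y * (1 + t * G y) ^ α) / t ^ 2) /
      (Real.log (∑ x, μ x * (1 + t * g x) ^ α) / t ^ 2)) (𝓝[>] (0:ℝ))
      (𝓝 ((c₀ * chiSq (push ν K) (push μ K)) / (c₀ * chiSq ν μ))) :=
    hB2.div hB1 hdenne
  have hval : (c₀ * chiSq (push ν K) (push μ K)) / (c₀ * chiSq ν μ)
      = chiSq (push ν K) (push μ K) / chiSq ν μ :=
    mul_div_mul_left _ _ hc₀ne
  rw [hval] at htend
  -- the path ν_t = μ + t f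
  set νt : ℝ → X → ℝ := fun t x => μ x + t * f x with hνt
  have hmemA : ∀ t : ℝ, t ∈ Set.Ioc (0:ℝ) 1 →
      renyiD α (push (νt t) K) (push μ K) / renyiD α (νt t) μ ∈ A := by
    intro t ht
    refine ⟨νt t, ⟨?_, ?_⟩, ?_, rfl⟩
    · intro x
      have : νt t x = (1 - t) * μ x + t * ν x := by
        simp only [hνt, hf]; ring
      rw [this]
      have h1 : 0 ≤ (1 - t) * μ x := mul_nonneg (by linarith [ht.2]) (hμpos x).le
      have h2 : 0 ≤ t * ν x := mul_nonneg ht.1.le (hν.1 x)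
      linarith
    · simp only [hνt, Finset.sum_add_distrib, hμ1, ← Finset.mul_sum, hfsum]
      ring
    · intro hcon
      obtain ⟨x₀, hx₀⟩ := hfne
      have h1 := congrFun hcon x₀
      simp only [hνt] at h1
      have h2 : t * f x₀ = 0 := by linarith
      exact (mul_ne_zero (ne_of_gt ht.1) hx₀) h2
  -- identify renyi ratio with the limit expression, for t ∈ Ioc 0 1
  have hexpr : ∀ t : ℝ, 0 < t →
      renyiD α (push (νt t) K) (push μ K) / renyiD α (νt t) μ
      = (Real.log (∑ y, push μ K y * (1 + t * G y) ^ α) / t ^ 2) /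
        (Real.log (∑ x, μ x * (1 + t * g x) ^ α) / t ^ 2) := by
    intro t ht
    have ht2 : t ^ 2 ≠ 0 := pow_ne_zero 2 (ne_of_gt ht)
    have hrin : ∀ x, νt t x / μ x = 1 + t * g x := by
      intro x
      have hμx : μ x ≠ 0 := ne_of_gt (hμpos x)
      have hgx : g x = f x / μ x := rfl
      simp only [hνt, hgx]
      field_simp
    have hrout : ∀ y, push (νt t) K y / push μ K y = 1 + t * G y := by
      intro y
      have hPy : push μ K y ≠ 0 := ne_of_gt (hout y)
      have hpt : push (νt t) K y = push μ K y + t * push f K y := by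
        simp only [push, hνt]
        rw [Finset.mul_sum, ← Finset.sum_add_distrib]
        apply Finset.sum_congr rfl
        intro x _
        ring
      have hGy : G y = (push ν K y - push μ K y) / push μ K y := rfl
      rw [hpt, hpushf y, hGy]
      field_simp
    have e1 : renyiD α (νt t) μ = (α - 1)⁻¹ * Real.log (∑ x, μ x * (1 + t * g x) ^ α) := by
      rw [renyiD]
      congr 2
      apply Finset.sum_congr rfl
      intro x _
      rw [hrin x]
    have e2 : renyiD α (push (νt t) K) (push μ K)
        = (α - 1)⁻¹ * Real.log (∑ y, push μ K y * (1 + t * G y) ^ α) := by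
      rw [renyiD]
      congr 2
      apply Finset.sum_congr rfl
      intro y _
      rw [hrout y]
    rw [e1, e2, mul_div_mul_left _ _ (ne_of_gt hαinv), div_div_div_comm,
      div_self ht2, div_one]
  -- conclude with le_of_tendsto
  have hev : ∀ᶠ t in 𝓝[>] (0:ℝ),
      (Real.log (∑ y, push μ K y * (1 + t * G y) ^ α) / t ^ 2) /
      (Real.log (∑ x, μ x * (1 + t * g x) ^ α) / t ^ 2) ≤ sSup A := by
    filter_upwards [Ioc_mem_nhdsGT_of_mem (Set.mem_Ico.mpr ⟨le_refl (0:ℝ), zero_lt_one⟩)]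
      with t ht
    rw [← hexpr t ht.1]
    exact le_csSup hbdd (hmemA t ht)
  exact le_of_tendsto htend hev
end
end

section
/- Let X and Y be finite alphabets and let K be a Markov kernel from X to Y. Fix α with 1 < α < ∞. Then η_α(K) ≥ η_{χ²}(K), where η_α(K) = sup_μ η_α(μ, K) and η_{χ²}(K) = sup_μ η_{χ²}(μ, K), both suprema taken over strictly positive probability distributions μ on X whose output μK is strictly positive on Y. -/
open scoped BigOperators

noncomputable section

/-- Channel-wise SDPI constant of the Rényi divergence:
`η_α(K) = sup_μ η_α(μ, K)`, supremum over admissible strictly positive `μ`. -/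
def etaAlphaChannel {X Y : Type*} [Fintype X] [Fintype Y]
    (α : ℝ) (K : X → Y → ℝ) : ℝ :=
  sSup {r : ℝ | ∃ μ : X → ℝ, IsProbDist μ ∧ (∀ x, 0 < μ x) ∧
    (∀ y, 0 < push μ K y) ∧ r = etaAlpha α μ K}

/-- Channel-wise SDPI constant of the χ²-divergence:
`η_{χ²}(K) = sup_μ η_{χ²}(μ, K)`, supremum over admissible strictly positive `μ`. -/
def etaChiChannel {X Y : Type*} [Fintype X] [Fintype Y]
    (K : X → Y → ℝ) : ℝ :=
  sSup {r : ℝ | ∃ μ : X → ℝ, IsProbDist μ ∧ (∀ x, 0 < μ x) ∧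
    (∀ y, 0 < push μ K y) ∧ r = etaChi μ K}


open Filter Topology Real Set

lemma aux1 (α : ℝ) :
    Tendsto (fun t : ℝ => ((1+t)^α - 1 - α*t)/t^2) (𝓝[≠] (0:ℝ)) (𝓝 (α*(α-1)/2)) := by
  have hball : ∀ᶠ t : ℝ in 𝓝[≠] (0:ℝ), 0 < 1 + t := by
    filter_upwards [eventually_nhdsWithin_of_eventually_nhds
      (eventually_gt_nhds (by norm_num : (-1:ℝ) < 0))] with t ht
    linarith
  have hderiv : ∀ t : ℝ, 0 < 1 + t →
      HasDerivAt (fun t : ℝ => (1+t)^α - 1 - α*t) (α*(1+t)^(α-1) - α) t := by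
    intro t ht
    have h1 : HasDerivAt (fun t : ℝ => (1+t)^α) (1*α*(1+t)^(α-1)) t :=
      ((hasDerivAt_id t).const_add 1).rpow_const (Or.inl (ne_of_gt ht))
    have h2 : HasDerivAt (fun t : ℝ => α*t) α t := by
      simpa using (hasDerivAt_id t).const_mul α
    have h3 := (h1.sub_const 1).sub h2
    simp only [one_mul] at h3
    exact h3
  have hslope : Tendsto (fun t : ℝ => ((1+t)^(α-1) - 1)/t) (𝓝[≠] (0:ℝ)) (𝓝 (α-1)) := by
    have h : HasDerivAt (fun t : ℝ => (1+t)^(α-1)) (α-1) 0 := by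
      have := ((hasDerivAt_id (0:ℝ)).const_add 1).rpow_const
        (p := α - 1) (Or.inl (by norm_num))
      simpa using this
    have := hasDerivAt_iff_tendsto_slope.mp h
    refine this.congr fun t => ?_
    simp [slope_def_field]
  apply HasDerivAt.lhopital_zero_nhdsNE
  · filter_upwards [hball] with t ht using hderiv t ht
  · filter_upwards with t using by simpa [pow_one] using hasDerivAt_pow 2 t
  · filter_upwards [self_mem_nhdsWithin] with t ht
    simp at ht
    positivity
  · have : Tendsto (fun t : ℝ => (1+t)^α - 1 - α*t) (𝓝 0) (𝓝 ((1+0)^α - 1 - α*0)) :=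
      ((hderiv 0 (by norm_num)).continuousAt).tendsto
    simpa using this.mono_left nhdsWithin_le_nhds
  · have : Tendsto (fun t : ℝ => t^2) (𝓝 0) (𝓝 (0^2 : ℝ)) := (continuous_pow 2).tendsto 0
    simpa using this.mono_left nhdsWithin_le_nhds
  · have h2 : Tendsto (fun t : ℝ => (α/2) * (((1+t)^(α-1) - 1)/t)) (𝓝[≠] (0:ℝ))
        (𝓝 ((α/2)*(α-1))) := tendsto_const_nhds.mul hslope
    have heq : ∀ᶠ t : ℝ in 𝓝[≠] (0:ℝ),
        (α/2) * (((1+t)^(α-1) - 1)/t) = (α*(1+t)^(α-1) - α)/(2*t) := by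
      filter_upwards [self_mem_nhdsWithin] with t ht
      simp at ht
      field_simp
    have := h2.congr' heq
    convert this using 2
    ring

lemma aux2 (α d : ℝ) :
    Tendsto (fun ε : ℝ => ((1+ε*d)^α - 1 - α*(ε*d))/ε^2) (𝓝[>] (0:ℝ))
      (𝓝 (α*(α-1)/2 * d^2)) := by
  rcases eq_or_ne d 0 with hd | hd
  · simp [hd]
  · have hmap : Tendsto (fun ε : ℝ => ε * d) (𝓝[>] (0:ℝ)) (𝓝[≠] (0:ℝ)) := by
      rw [tendsto_nhdsWithin_iff]
      constructor
      · have : Tendsto (fun ε : ℝ => ε * d) (𝓝 0) (𝓝 (0 * d)) :=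
          (continuous_id.mul continuous_const).tendsto 0
        simpa using this.mono_left nhdsWithin_le_nhds
      · filter_upwards [self_mem_nhdsWithin] with ε hε
        simp only [Set.mem_compl_iff, Set.mem_singleton_iff]
        exact mul_ne_zero (ne_of_gt hε) hd
    have h1 := ((aux1 α).comp hmap).const_mul (d^2)
    have heq : ∀ᶠ ε : ℝ in 𝓝[>] (0:ℝ),
        d^2 * (((1+ε*d)^α - 1 - α*(ε*d))/(ε*d)^2) = ((1+ε*d)^α - 1 - α*(ε*d))/ε^2 := by
      filter_upwards [self_mem_nhdsWithin] with ε hε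
      have : (ε:ℝ) ≠ 0 := ne_of_gt hε
      field_simp
    have := h1.congr' heq
    convert this using 2
    ring

lemma aux3 {ι : Type*} [Fintype ι] (α : ℝ) (w d : ι → ℝ)
    (hw1 : ∑ i, w i = 1) (hd0 : ∑ i, w i * d i = 0) :
    Tendsto (fun ε : ℝ => (∑ i, w i * (1+ε*d i)^α - 1)/ε^2) (𝓝[>] (0:ℝ))
      (𝓝 (α*(α-1)/2 * ∑ i, w i * d i^2)) := by
  have key : ∀ ε : ℝ, (∑ i, w i * (1+ε*d i)^α - 1)/ε^2
      = ∑ i, w i * (((1+ε*d i)^α - 1 - α*(ε*d i))/ε^2) := by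
    intro ε
    rw [show ∑ i, w i * (((1+ε*d i)^α - 1 - α*(ε*d i))/ε^2)
        = (∑ i, w i * ((1+ε*d i)^α - 1 - α*(ε*d i)))/ε^2 by
      rw [Finset.sum_div]; exact Finset.sum_congr rfl fun i _ => (mul_div_assoc _ _ _).symm]
    congr 1
    have : ∑ i, w i * ((1+ε*d i)^α - 1 - α*(ε*d i))
        = ∑ i, w i * (1+ε*d i)^α - ∑ i, w i - α*ε*∑ i, w i * d i := by
      rw [Finset.mul_sum, ← Finset.sum_sub_distrib, ← Finset.sum_sub_distrib]
      exact Finset.sum_congr rfl fun i _ => by ring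
    rw [this, hw1, hd0]
    ring
  have hsum : Tendsto (fun ε : ℝ => ∑ i, w i * (((1+ε*d i)^α - 1 - α*(ε*d i))/ε^2))
      (𝓝[>] (0:ℝ)) (𝓝 (∑ i, w i * (α*(α-1)/2 * d i^2))) :=
    tendsto_finset_sum _ fun i _ => (aux2 α (d i)).const_mul (w i)
  have : α*(α-1)/2 * ∑ i, w i * d i^2 = ∑ i, w i * (α*(α-1)/2 * d i^2) := by
    rw [Finset.mul_sum]; exact Finset.sum_congr rfl fun i _ => by ring
  rw [this]
  exact hsum.congr fun ε => (key ε).symm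

noncomputable def Gfun : ℝ → ℝ := fun u => if u = 0 then 1 else Real.log (1+u)/u

lemma Gcont : Tendsto Gfun (𝓝 (0:ℝ)) (𝓝 1) := by
  rw [← nhdsNE_sup_pure]
  rw [tendsto_sup]
  constructor
  · have h : HasDerivAt (fun u : ℝ => Real.log (1+u)) 1 0 := by
      have := ((hasDerivAt_id (0:ℝ)).const_add 1).log (by norm_num)
      simpa using this
    have hs := hasDerivAt_iff_tendsto_slope.mp h
    refine hs.congr' ?_
    filter_upwards [self_mem_nhdsWithin] with u hu
    simp only [Set.mem_compl_iff, Set.mem_singleton_iff] at hu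
    simp [Gfun, hu, slope_def_field]
  · simpa [Gfun] using tendsto_pure_nhds Gfun 0

lemma Glog (u : ℝ) : Real.log (1+u) = Gfun u * u := by
  rcases eq_or_ne u 0 with h | h
  · simp [h]
  · simp [Gfun, h, div_mul_cancel₀]

lemma aux4 {ι : Type*} [Fintype ι] (α : ℝ) (w d : ι → ℝ)
    (hw1 : ∑ i, w i = 1) (hd0 : ∑ i, w i * d i = 0) :
    Tendsto (fun ε : ℝ => Real.log (∑ i, w i * (1+ε*d i)^α) / ε^2) (𝓝[>] (0:ℝ))
      (𝓝 (α*(α-1)/2 * ∑ i, w i * d i^2)) := by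
  have hsum := aux3 α w d hw1 hd0
  have hε2 : Tendsto (fun ε : ℝ => ε^2) (𝓝[>] (0:ℝ)) (𝓝 0) := by
    have : Tendsto (fun ε : ℝ => ε^2) (𝓝 0) (𝓝 ((0:ℝ)^2)) := (continuous_pow 2).tendsto 0
    simpa using this.mono_left nhdsWithin_le_nhds
  have hF1 : Tendsto (fun ε : ℝ => (∑ i, w i * (1+ε*d i)^α) - 1) (𝓝[>] (0:ℝ)) (𝓝 0) := by
    have h := hsum.mul hε2
    have heq : ∀ᶠ ε : ℝ in 𝓝[>] (0:ℝ),
        ((∑ i, w i * (1+ε*d i)^α - 1)/ε^2) * ε^2 = (∑ i, w i * (1+ε*d i)^α) - 1 := by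
      filter_upwards [self_mem_nhdsWithin] with ε hε
      have h2 : (ε:ℝ)^2 ≠ 0 := pow_ne_zero _ (ne_of_gt hε)
      field_simp
      exact mul_div_cancel_left₀ _ (ne_of_gt hε)
    simpa using h.congr' heq
  have hmain := (Gcont.comp hF1).mul hsum
  have heq : ∀ᶠ ε : ℝ in 𝓝[>] (0:ℝ),
      (Gfun ((∑ i, w i * (1+ε*d i)^α) - 1)) * ((∑ i, w i * (1+ε*d i)^α - 1)/ε^2)
        = Real.log (∑ i, w i * (1+ε*d i)^α) / ε^2 := by
    filter_upwards with ε
    have := Glog ((∑ i, w i * (1+ε*d i)^α) - 1)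
    rw [show (1:ℝ) + ((∑ i, w i * (1+ε*d i)^α) - 1) = ∑ i, w i * (1+ε*d i)^α by ring] at this
    rw [← mul_div_assoc, ← this]
  simpa using hmain.congr' heq

section Lemmas

variable {X Y : Type*} [Fintype X] [Fintype Y] {K : X → Y → ℝ} {α : ℝ}

lemma sum_push (hK : IsKernel K) (ρ : X → ℝ) : ∑ y, push ρ K y = ∑ x, ρ x := by
  rw [show ∑ y, push ρ K y = ∑ x, ∑ y, ρ x * K x y from Finset.sum_comm]
  exact Finset.sum_congr rfl fun x _ => by rw [← Finset.mul_sum, hK.2 x, mul_one]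

lemma push_nonneg (hK : IsKernel K) {ρ : X → ℝ} (hρ : ∀ x, 0 ≤ ρ x) (y : Y) :
    0 ≤ push ρ K y :=
  Finset.sum_nonneg fun x _ => mul_nonneg (hρ x) (hK.1 x y)

lemma jensen_ge {ι : Type*} [Fintype ι] (hα : 1 ≤ α) (w p : ι → ℝ)
    (hw : ∀ i, 0 ≤ w i) (hw1 : ∑ i, w i = 1) (hp : ∀ i, 0 ≤ p i)
    (hp1 : ∑ i, w i * p i = 1) : 1 ≤ ∑ i, w i * p i ^ α := by
  have h := (convexOn_rpow hα).map_sum_le (t := Finset.univ)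
    (fun i _ => hw i) hw1 (fun i _ => Set.mem_Ici.mpr (hp i))
  simpa [smul_eq_mul, hp1, Real.one_rpow] using h

lemma jensen_gt {ι : Type*} [Fintype ι] (hα : 1 < α) (w p : ι → ℝ)
    (hw : ∀ i, 0 < w i) (hw1 : ∑ i, w i = 1) (hp : ∀ i, 0 ≤ p i)
    (hp1 : ∑ i, w i * p i = 1) (hne : ∃ i, p i ≠ 1) :
    1 < ∑ i, w i * p i ^ α := by
  obtain ⟨i0, hi0⟩ := hne
  have hjk : ∃ j ∈ Finset.univ (α := ι), ∃ k ∈ Finset.univ (α := ι), p j ≠ p k := by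
    by_contra h
    push_neg at h
    have hall : ∀ j, p j = p i0 := fun j =>
      h j (Finset.mem_univ j) i0 (Finset.mem_univ i0)
    have : ∑ i, w i * p i = p i0 := by
      rw [show ∑ i, w i * p i = ∑ i, w i * p i0 from
        Finset.sum_congr rfl fun i _ => by rw [hall i], ← Finset.sum_mul, hw1, one_mul]
    exact hi0 (this ▸ hp1)
  have h := (strictConvexOn_rpow hα).map_sum_lt (fun i _ => hw i) hw1
    (fun i _ => Set.mem_Ici.mpr (hp i)) hjk
  simpa [smul_eq_mul, hp1, Real.one_rpow] using h

lemma dpi_sum (hα : 1 ≤ α) (hK : IsKernel K) {μ ν : X → ℝ}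
    (hμ : ∀ x, 0 < μ x) (hν : ∀ x, 0 ≤ ν x) (hpush : ∀ y, 0 < push μ K y) :
    ∑ y, push μ K y * (push ν K y / push μ K y) ^ α ≤ ∑ x, μ x * (ν x / μ x) ^ α := by
  have key : ∀ y, push μ K y * (push ν K y / push μ K y) ^ α
      ≤ ∑ x, μ x * K x y * (ν x / μ x) ^ α := by
    intro y
    have hwsum : ∑ x, μ x * K x y / push μ K y = 1 := by
      rw [← Finset.sum_div, div_eq_one_iff_eq (ne_of_gt (hpush y))]
      rfl
    have hcenter : ∑ x, (μ x * K x y / push μ K y) * (ν x / μ x)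
        = push ν K y / push μ K y := by
      rw [show ∑ x, (μ x * K x y / push μ K y) * (ν x / μ x)
          = ∑ x, (ν x * K x y) / push μ K y from Finset.sum_congr rfl fun x _ => by
        have hx : μ x ≠ 0 := ne_of_gt (hμ x)
        have hP : push μ K y ≠ 0 := ne_of_gt (hpush y)
        field_simp, ← Finset.sum_div]
      rfl
    have h := (convexOn_rpow hα).map_sum_le (t := Finset.univ)
      (fun x _ => div_nonneg (mul_nonneg (le_of_lt (hμ x)) (hK.1 x y)) (le_of_lt (hpush y)))
      hwsum (fun x _ => Set.mem_Ici.mpr (div_nonneg (hν x) (le_of_lt (hμ x))))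
    simp only [smul_eq_mul] at h
    rw [hcenter] at h
    calc push μ K y * (push ν K y / push μ K y) ^ α
        ≤ push μ K y * ∑ x, (μ x * K x y / push μ K y) * (ν x / μ x) ^ α :=
          mul_le_mul_of_nonneg_left h (le_of_lt (hpush y))
      _ = ∑ x, μ x * K x y * (ν x / μ x) ^ α := by
          rw [Finset.mul_sum]
          exact Finset.sum_congr rfl fun x _ => by
            have hP : push μ K y ≠ 0 := ne_of_gt (hpush y)
            field_simp
  calc ∑ y, push μ K y * (push ν K y / push μ K y) ^ α
      ≤ ∑ y, ∑ x, μ x * K x y * (ν x / μ x) ^ α := Finset.sum_le_sum fun y _ => key y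
    _ = ∑ x, μ x * (ν x / μ x) ^ α := by
        rw [Finset.sum_comm]
        exact Finset.sum_congr rfl fun x _ => by
          rw [show ∑ y, μ x * K x y * (ν x / μ x) ^ α
            = (μ x * (ν x / μ x) ^ α) * ∑ y, K x y from by
              rw [Finset.mul_sum]; exact Finset.sum_congr rfl fun y _ => by ring,
            hK.2 x, mul_one]


lemma renyi_sum_gt_one (hα : 1 < α) {μ ν : X → ℝ} (hμ : IsProbDist μ)
    (hμpos : ∀ x, 0 < μ x) (hν : IsProbDist ν) (hne : ν ≠ μ) :
    1 < ∑ x, μ x * (ν x / μ x) ^ α := by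
  apply jensen_gt hα μ (fun x => ν x / μ x) hμpos hμ.2
    (fun x => div_nonneg (hν.1 x) (le_of_lt (hμpos x)))
  · rw [show ∑ x, μ x * (ν x / μ x) = ∑ x, ν x from Finset.sum_congr rfl fun x _ => by
      rw [mul_comm, div_mul_cancel₀ _ (ne_of_gt (hμpos x))]]
    exact hν.2
  · obtain ⟨x, hx⟩ := Function.ne_iff.mp hne
    exact ⟨x, fun h => hx ((div_eq_one_iff_eq (ne_of_gt (hμpos x))).mp h)⟩

lemma renyiD_pos (hα : 1 < α) {μ ν : X → ℝ} (hμ : IsProbDist μ)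
    (hμpos : ∀ x, 0 < μ x) (hν : IsProbDist ν) (hne : ν ≠ μ) :
    0 < renyiD α ν μ :=
  mul_pos (inv_pos.mpr (by linarith)) (Real.log_pos (renyi_sum_gt_one hα hμ hμpos hν hne))

lemma renyi_sum_out_ge_one (hα : 1 < α) (hK : IsKernel K) {μ ν : X → ℝ}
    (hμ : IsProbDist μ) (hpush : ∀ y, 0 < push μ K y) (hν : IsProbDist ν) :
    1 ≤ ∑ y, push μ K y * (push ν K y / push μ K y) ^ α := by
  apply jensen_ge (le_of_lt hα) (push μ K) (fun y => push ν K y / push μ K y)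
    (fun y => le_of_lt (hpush y))
  · rw [sum_push hK μ, hμ.2]
  · exact fun y => div_nonneg (push_nonneg hK hν.1 y) (le_of_lt (hpush y))
  · rw [show ∑ y, push μ K y * (push ν K y / push μ K y) = ∑ y, push ν K y from
      Finset.sum_congr rfl fun y _ => by
        rw [mul_comm, div_mul_cancel₀ _ (ne_of_gt (hpush y))]]
    rw [sum_push hK ν, hν.2]

lemma renyiD_out_nonneg (hα : 1 < α) (hK : IsKernel K) {μ ν : X → ℝ}
    (hμ : IsProbDist μ) (hpush : ∀ y, 0 < push μ K y) (hν : IsProbDist ν) :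
    0 ≤ renyiD α (push ν K) (push μ K) :=
  mul_nonneg (inv_nonneg.mpr (by linarith)) (Real.log_nonneg (renyi_sum_out_ge_one hα hK hμ hpush hν))

lemma renyiD_dpi (hα : 1 < α) (hK : IsKernel K) {μ ν : X → ℝ}
    (hμ : IsProbDist μ) (hμpos : ∀ x, 0 < μ x) (hpush : ∀ y, 0 < push μ K y)
    (hν : IsProbDist ν) :
    renyiD α (push ν K) (push μ K) ≤ renyiD α ν μ := by
  apply mul_le_mul_of_nonneg_left _ (inv_nonneg.mpr (by linarith : (0:ℝ) ≤ α - 1))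
  apply Real.log_le_log
  · exact lt_of_lt_of_le one_pos (renyi_sum_out_ge_one hα hK hμ hpush hν)
  · exact dpi_sum (le_of_lt hα) hK hμpos hν.1 hpush

lemma chiSq_pos {μ ν : X → ℝ} (hμpos : ∀ x, 0 < μ x) (hne : ν ≠ μ) :
    0 < chiSq ν μ := by
  obtain ⟨x0, hx0⟩ := Function.ne_iff.mp hne
  apply Finset.sum_pos' (fun x _ => div_nonneg (sq_nonneg _) (le_of_lt (hμpos x)))
  refine ⟨x0, Finset.mem_univ x0, div_pos ?_ (hμpos x0)⟩
  have : ν x0 - μ x0 ≠ 0 := sub_ne_zero.mpr hx0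
  positivity

lemma push_affine (ε : ℝ) (μ ν : X → ℝ) (y : Y) :
    push (fun x => μ x + ε * (ν x - μ x)) K y
      = push μ K y + ε * (push ν K y - push μ K y) := by
  simp only [push, add_mul, sub_mul, mul_assoc, Finset.sum_add_distrib,
    Finset.sum_sub_distrib, ← Finset.mul_sum]


lemma ratio_tendsto (hα : 1 < α) (hK : IsKernel K) {μ ν : X → ℝ}
    (hμ : IsProbDist μ) (hμpos : ∀ x, 0 < μ x) (hpush : ∀ y, 0 < push μ K y)
    (hν : IsProbDist ν) (hne : ν ≠ μ) :
    Tendsto (fun ε : ℝ =>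
        renyiD α (push (fun x => μ x + ε * (ν x - μ x)) K) (push μ K)
          / renyiD α (fun x => μ x + ε * (ν x - μ x)) μ)
      (𝓝[>] (0:ℝ))
      (𝓝 (chiSq (push ν K) (push μ K) / chiSq ν μ)) := by
  set din : X → ℝ := fun x => (ν x - μ x) / μ x with hdin
  set dout : Y → ℝ := fun y => (push ν K y - push μ K y) / push μ K y with hdout
  have hin0 : ∑ x, μ x * din x = 0 := by
    rw [show ∑ x, μ x * din x = ∑ x, (ν x - μ x) from Finset.sum_congr rfl fun x _ => by
      rw [hdin, mul_comm, div_mul_cancel₀ _ (ne_of_gt (hμpos x))]]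
    rw [Finset.sum_sub_distrib, hμ.2, hν.2, sub_self]
  have hout0 : ∑ y, push μ K y * dout y = 0 := by
    rw [show ∑ y, push μ K y * dout y = ∑ y, (push ν K y - push μ K y) from
      Finset.sum_congr rfl fun y _ => by
        rw [hdout, mul_comm, div_mul_cancel₀ _ (ne_of_gt (hpush y))]]
    rw [Finset.sum_sub_distrib, sum_push hK, sum_push hK, hμ.2, hν.2, sub_self]
  have hchi_in : ∑ x, μ x * din x ^ 2 = chiSq ν μ := by
    refine Finset.sum_congr rfl fun x _ => ?_
    rw [hdin]
    have hx : μ x ≠ 0 := ne_of_gt (hμpos x)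
    field_simp
  have hchi_out : ∑ y, push μ K y * dout y ^ 2 = chiSq (push ν K) (push μ K) := by
    refine Finset.sum_congr rfl fun y _ => ?_
    rw [hdout]
    have hy : push μ K y ≠ 0 := ne_of_gt (hpush y)
    field_simp
  have hsum_out1 : ∑ y, push μ K y = 1 := by rw [sum_push hK, hμ.2]
  have hlog_in := aux4 α μ din hμ.2 hin0
  have hlog_out := aux4 α (push μ K) dout hsum_out1 hout0
  rw [hchi_in] at hlog_in
  rw [hchi_out] at hlog_out
  have hχin : 0 < chiSq ν μ := chiSq_pos hμpos hne
  have hc : (0:ℝ) < α*(α-1)/2 := by nlinarith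
  have hcpos : (0:ℝ) < α*(α-1)/2 * chiSq ν μ := mul_pos hc hχin
  have hdiv := hlog_out.div hlog_in (ne_of_gt hcpos)
  have hval : α*(α-1)/2 * chiSq (push ν K) (push μ K) / (α*(α-1)/2 * chiSq ν μ)
      = chiSq (push ν K) (push μ K) / chiSq ν μ :=
    mul_div_mul_left _ _ (ne_of_gt hc)
  rw [hval] at hdiv
  refine hdiv.congr' ?_
  filter_upwards [self_mem_nhdsWithin] with ε hε
  have hε0 : (ε:ℝ) ≠ 0 := ne_of_gt hε
  have hε2 : (ε:ℝ)^2 ≠ 0 := pow_ne_zero _ hε0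
  have hin_eq : renyiD α (fun x => μ x + ε * (ν x - μ x)) μ
      = (α - 1)⁻¹ * Real.log (∑ x, μ x * (1 + ε * din x)^α) := by
    unfold renyiD
    congr 2
    refine Finset.sum_congr rfl fun x _ => ?_
    congr 2
    rw [hdin]
    have hx : μ x ≠ 0 := ne_of_gt (hμpos x)
    field_simp
  have hout_eq : renyiD α (push (fun x => μ x + ε * (ν x - μ x)) K) (push μ K)
      = (α - 1)⁻¹ * Real.log (∑ y, push μ K y * (1 + ε * dout y)^α) := by
    unfold renyiD
    congr 2
    refine Finset.sum_congr rfl fun y _ => ?_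
    congr 2
    rw [push_affine, hdout]
    have hy : push μ K y ≠ 0 := ne_of_gt (hpush y)
    field_simp
  rw [Pi.div_apply, hin_eq, hout_eq]
  have hinv : ((α:ℝ) - 1)⁻¹ ≠ 0 := inv_ne_zero (by linarith)
  rw [div_div_div_comm, div_self hε2, div_one, mul_div_mul_left _ _ hinv]

lemma etaAlpha_set_bdd (hα : 1 < α) (hK : IsKernel K) {μ : X → ℝ}
    (hμ : IsProbDist μ) (hμpos : ∀ x, 0 < μ x) (hpush : ∀ y, 0 < push μ K y) :
    ∀ r ∈ {r : ℝ | ∃ ν : X → ℝ, IsProbDist ν ∧ ν ≠ μ ∧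
      r = renyiD α (push ν K) (push μ K) / renyiD α ν μ}, 0 ≤ r ∧ r ≤ 1 := by
  rintro r ⟨ν, hν, hne, rfl⟩
  constructor
  · exact div_nonneg (renyiD_out_nonneg hα hK hμ hpush hν)
      (le_of_lt (renyiD_pos hα hμ hμpos hν hne))
  · rw [div_le_one (renyiD_pos hα hμ hμpos hν hne)]
    exact renyiD_dpi hα hK hμ hμpos hpush hν

lemma etaAlpha_nonneg (hα : 1 < α) (hK : IsKernel K) {μ : X → ℝ}
    (hμ : IsProbDist μ) (hμpos : ∀ x, 0 < μ x) (hpush : ∀ y, 0 < push μ K y) :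
    0 ≤ etaAlpha α μ K := by
  unfold etaAlpha
  rcases Set.eq_empty_or_nonempty {r : ℝ | ∃ ν : X → ℝ, IsProbDist ν ∧ ν ≠ μ ∧
      r = renyiD α (push ν K) (push μ K) / renyiD α ν μ} with h | ⟨r, hr⟩
  · rw [h, Real.sSup_empty]
  · refine le_trans ((etaAlpha_set_bdd hα hK hμ hμpos hpush) r hr).1 ?_
    exact le_csSup ⟨1, fun x hx => ((etaAlpha_set_bdd hα hK hμ hμpos hpush) x hx).2⟩ hr

lemma etaAlpha_le_one (hα : 1 < α) (hK : IsKernel K) {μ : X → ℝ}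
    (hμ : IsProbDist μ) (hμpos : ∀ x, 0 < μ x) (hpush : ∀ y, 0 < push μ K y) :
    etaAlpha α μ K ≤ 1 :=
  Real.sSup_le (fun r hr => ((etaAlpha_set_bdd hα hK hμ hμpos hpush) r hr).2) zero_le_one

lemma etaChi_le_etaAlpha (hα : 1 < α) (hK : IsKernel K) {μ : X → ℝ}
    (hμ : IsProbDist μ) (hμpos : ∀ x, 0 < μ x) (hpush : ∀ y, 0 < push μ K y) :
    etaChi μ K ≤ etaAlpha α μ K := by
  apply Real.sSup_le _ (etaAlpha_nonneg hα hK hμ hμpos hpush)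
  rintro r ⟨ν, hν, hne, rfl⟩
  have htend := ratio_tendsto hα hK hμ hμpos hpush hν hne
  apply le_of_tendsto htend
  filter_upwards [Ioo_mem_nhdsGT_of_mem (Set.left_mem_Ico.mpr one_pos)] with ε hε
  have hprob : IsProbDist (fun x => μ x + ε * (ν x - μ x)) := by
    constructor
    · intro x
      show 0 ≤ μ x + ε * (ν x - μ x)
      have h1 := hμpos x
      have h2 := hν.1 x
      have h3 := hε.1
      have h4 := hε.2
      nlinarith
    · rw [Finset.sum_add_distrib, ← Finset.mul_sum, Finset.sum_sub_distrib,
        hμ.2, hν.2, sub_self, mul_zero, add_zero]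
  have hnemem : (fun x => μ x + ε * (ν x - μ x)) ≠ μ := by
    intro h
    obtain ⟨x, hx⟩ := Function.ne_iff.mp hne
    have h0 : μ x + ε * (ν x - μ x) = μ x := congrFun h x
    have h1 : ε * (ν x - μ x) = 0 := by linarith
    rcases mul_eq_zero.mp h1 with h2 | h2
    · exact ne_of_gt hε.1 h2
    · exact hx (by linarith)
  exact le_csSup ⟨1, fun x hx => ((etaAlpha_set_bdd hα hK hμ hμpos hpush) x hx).2⟩
    ⟨_, hprob, hnemem, rfl⟩

end Lemmas

/-- Corollary: `η_α(K) ≥ η_{χ²}(K)` for every Markov kernel `K` and `1 < α < ∞`. -/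
theorem sdpi_renyi_channel_ge_chiSq_channel
    {X Y : Type*} [Fintype X] [Fintype Y]
    (K : X → Y → ℝ) (hK : IsKernel K) (α : ℝ) (hα : 1 < α) :
    etaChiChannel K ≤ etaAlphaChannel α K := by
  have hbddA : BddAbove {r : ℝ | ∃ μ : X → ℝ, IsProbDist μ ∧ (∀ x, 0 < μ x) ∧
      (∀ y, 0 < push μ K y) ∧ r = etaAlpha α μ K} := by
    refine ⟨1, ?_⟩
    rintro r ⟨μ, hμ, hpos, hpush, rfl⟩
    exact etaAlpha_le_one hα hK hμ hpos hpush
  have hnnA : 0 ≤ etaAlphaChannel α K := by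
    unfold etaAlphaChannel
    rcases Set.eq_empty_or_nonempty {r : ℝ | ∃ μ : X → ℝ, IsProbDist μ ∧ (∀ x, 0 < μ x) ∧
        (∀ y, 0 < push μ K y) ∧ r = etaAlpha α μ K} with h | ⟨r, hr⟩
    · rw [h, Real.sSup_empty]
    · refine le_trans ?_ (le_csSup hbddA hr)
      obtain ⟨μ, hμ, hpos, hpush, rfl⟩ := hr
      exact etaAlpha_nonneg hα hK hμ hpos hpush
  unfold etaChiChannel
  apply Real.sSup_le _ hnnA
  rintro r ⟨μ, hμ, hpos, hpush, rfl⟩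
  exact le_trans (etaChi_le_etaAlpha hα hK hμ hpos hpush)
    (le_csSup hbddA ⟨μ, hμ, hpos, hpush, rfl⟩)
end
end

section
/- Let K be the Markov kernel induced by an n × m row-stochastic matrix (K_{ij}) with n ≥ 2, and let μ = (μ_1, …, μ_n) be a strictly positive probability distribution on an alphabet of size n such that μK is strictly positive. Fix α with 1 < α < ∞. Then η_α(μ, K) ≥ max_{1 ≤ i ≠ ℓ ≤ n} (μ_i μ_ℓ / (μ_i + μ_ℓ)) · Σ_{j=1}^m (K_{ij} − K_{ℓj})² / (μK)_j, where (μK)_j = Σ_{i=1}^n μ_i K_{ij}. -/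
open scoped BigOperators

noncomputable section

open Filter Topology

section AuxSDPI

lemma aux_tendsto {ι : Type*} [Fintype ι] (w c : ι → ℝ) (hw : ∀ x, 0 < w x)
    (hw1 : ∑ x, w x = 1) (hc : ∑ x, w x * c x = 0) {α : ℝ} (hα : 1 < α) :
    Tendsto (fun t : ℝ => Real.log (∑ x, w x * (1 + t * c x) ^ α) / t ^ 2)
      (𝓝[>] (0:ℝ)) (𝓝 (α * (α - 1) / 2 * ∑ x, w x * c x ^ 2)) := by
  have hne : (Finset.univ : Finset ι).Nonempty := by
    by_contra h
    rw [Finset.not_nonempty_iff_eq_empty] at h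
    rw [h, Finset.sum_empty] at hw1; norm_num at hw1
  set Φ : ℝ → ℝ := fun t => ∑ x, w x * (1 + t * c x) ^ α with hΦdef
  set Φ' : ℝ → ℝ := fun t => ∑ x, w x * (c x * α * (1 + t * c x) ^ (α - 1)) with hΦ'def
  have hlin : ∀ (x : ι) (t : ℝ), HasDerivAt (fun s : ℝ => 1 + s * c x) (c x) t := fun x t =>
    (hasDerivAt_mul_const (c x)).const_add 1
  have hd : ∀ t, HasDerivAt Φ (Φ' t) t := by
    intro t
    exact HasDerivAt.fun_sum fun x _ =>
      (((hlin x t).rpow_const (Or.inr hα.le)).const_mul (w x))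
  have hΦ'0 : Φ' 0 = 0 := by
    have h1 : ∀ x : ι, w x * (c x * α * (1 + 0 * c x) ^ (α - 1)) = α * (w x * c x) := by
      intro x; rw [zero_mul, add_zero, Real.one_rpow]; ring
    simp only [hΦ'def, h1, ← Finset.mul_sum, hc, mul_zero]
  have hd2 : HasDerivAt Φ' (α * (α - 1) * ∑ x, w x * c x ^ 2) 0 := by
    have h1 : ∀ x : ι, HasDerivAt (fun t : ℝ => w x * (c x * α * (1 + t * c x) ^ (α - 1)))
        (w x * (c x * α * (c x * (α - 1) * (1 + 0 * c x) ^ (α - 1 - 1)))) 0 := by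
      intro x
      exact (((hlin x 0).rpow_const (Or.inl (by norm_num))).const_mul (c x * α)).const_mul (w x)
    have hsum := HasDerivAt.fun_sum (fun x (_ : x ∈ Finset.univ) => h1 x)
    refine HasDerivAt.congr_deriv hsum ?_
    rw [Finset.mul_sum]
    refine Finset.sum_congr rfl fun x _ => ?_
    rw [zero_mul, add_zero, Real.one_rpow]
    ring
  have hev : ∀ᶠ t in 𝓝 (0:ℝ), ∀ x, 0 < 1 + t * c x := by
    rw [eventually_all]
    intro x
    have hcont : Tendsto (fun t : ℝ => 1 + t * c x) (𝓝 0) (𝓝 1) := by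
      have := (hlin x 0).continuousAt.tendsto
      simpa using this
    exact hcont.eventually (eventually_gt_nhds one_pos)
  have hΦpos : ∀ᶠ t in 𝓝 (0:ℝ), 0 < Φ t := by
    filter_upwards [hev] with t ht
    exact Finset.sum_pos (fun x _ => mul_pos (hw x) (Real.rpow_pos_of_pos (ht x) α)) hne
  have hΦ0 : Φ 0 = 1 := by
    simp only [hΦdef, zero_mul, add_zero, Real.one_rpow, mul_one]
    exact hw1
  have hmono : 𝓝[>] (0:ℝ) ≤ 𝓝 0 := nhdsWithin_le_nhds
  have hslope : Tendsto (fun t => Φ' t / t) (𝓝[>] (0:ℝ))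
      (𝓝 (α * (α - 1) * ∑ x, w x * c x ^ 2)) := by
    have h2 : 𝓝[>] (0:ℝ) ≤ 𝓝[≠] (0:ℝ) :=
      nhdsWithin_mono 0 (fun t ht => ne_of_gt ht)
    have := (hasDerivAt_iff_tendsto_slope.mp hd2).mono_left h2
    refine this.congr fun t => ?_
    simp [slope_def_field, hΦ'0]
  have hΦt : Tendsto (fun t => 2 * Φ t) (𝓝[>] (0:ℝ)) (𝓝 2) := by
    have := ((hd 0).continuousAt.tendsto.mono_left hmono).const_mul (2:ℝ)
    simpa [hΦ0] using this
  have hdiv : Tendsto (fun t => (Φ' t / Φ t) / (2 * t)) (𝓝[>] (0:ℝ))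
      (𝓝 (α * (α - 1) / 2 * ∑ x, w x * c x ^ 2)) := by
    have h3 := hslope.div hΦt (by norm_num)
    have heq : ∀ t : ℝ, (Φ' t / t) / (2 * Φ t) = (Φ' t / Φ t) / (2 * t) := by
      intro t
      rw [div_div, div_div]
      ring_nf
    have h4 := h3.congr heq
    convert h4 using 2
    ring
  refine HasDerivAt.lhopital_zero_nhdsGT
    (f' := fun t => Φ' t / Φ t) (g' := fun t => 2 * t) ?_ ?_ ?_ ?_ ?_ hdiv
  · filter_upwards [hmono hΦpos] with t ht
    exact (hd t).log ht.ne'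
  · exact Eventually.of_forall fun t => by simpa using hasDerivAt_pow 2 t
  · filter_upwards [self_mem_nhdsWithin] with t ht
    have : (0:ℝ) < t := ht
    positivity
  · have h5 : ContinuousAt (fun t => Real.log (Φ t)) 0 := by
      apply ContinuousAt.comp (g := Real.log)
      · exact Real.continuousAt_log (by rw [hΦ0]; norm_num)
      · exact (hd 0).differentiableAt.continuousAt
    have := h5.tendsto.mono_left hmono
    simpa [hΦ0] using this
  · have := ((continuous_pow 2).tendsto (0:ℝ)).mono_left hmono
    simpa using this

variable {X Y : Type*} [Fintype X] [Fintype Y]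
variable {X Y : Type*} [Fintype X] [Fintype Y]

lemma jensen_rpow_one_le {ι : Type*} [Fintype ι] (w z : ι → ℝ) (hw : ∀ x, 0 ≤ w x)
    (hz : ∀ x, 0 ≤ z x) (hwz : ∑ x, w x * z x = 1) (hw1 : ∑ x, w x = 1)
    {α : ℝ} (hα : 1 ≤ α) : 1 ≤ ∑ x, w x * z x ^ α := by
  have h := Real.rpow_arith_mean_le_arith_mean_rpow Finset.univ w z
    (fun i _ => hw i) hw1 (fun i _ => hz i) hα
  rwa [hwz, Real.one_rpow] at h

lemma push_sum_one {K : X → Y → ℝ} (hK : IsKernel K) {μ : X → ℝ} (hμ : IsProbDist μ) :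
    ∑ y, push μ K y = 1 := by
  simp only [push]
  rw [Finset.sum_comm]
  calc ∑ x, ∑ y, μ x * K x y = ∑ x, μ x * ∑ y, K x y := by
        simp [Finset.mul_sum]
    _ = 1 := by simp only [hK.2, mul_one]; exact hμ.2

lemma dpi_sum_le {K : X → Y → ℝ} (hK : IsKernel K) {ν μ : X → ℝ} (hν : IsProbDist ν)
    (hμpos : ∀ x, 0 < μ x) (hout : ∀ y, 0 < push μ K y) {α : ℝ} (hα : 1 ≤ α) :
    ∑ y, push μ K y * (push ν K y / push μ K y) ^ α ≤ ∑ x, μ x * (ν x / μ x) ^ α := by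
  have key : ∀ y, push μ K y * (push ν K y / push μ K y) ^ α
      ≤ ∑ x, μ x * K x y * (ν x / μ x) ^ α := by
    intro y
    have hP := hout y
    have hsum1 : ∑ x, μ x * K x y / push μ K y = 1 := by
      rw [← Finset.sum_div, div_eq_one_iff_eq hP.ne']
      rfl
    have hrepr : push ν K y / push μ K y
        = ∑ x, (μ x * K x y / push μ K y) * (ν x / μ x) := by
      rw [push, Finset.sum_div]
      refine Finset.sum_congr rfl fun x _ => ?_
      field_simp [(hμpos x).ne']
    have h := Real.rpow_arith_mean_le_arith_mean_rpow Finset.univ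
      (fun x => μ x * K x y / push μ K y) (fun x => ν x / μ x)
      (fun x _ => div_nonneg (mul_nonneg (hμpos x).le (hK.1 x y)) hP.le)
      hsum1 (fun x _ => div_nonneg (hν.1 x) (hμpos x).le) hα
    rw [← hrepr] at h
    calc push μ K y * (push ν K y / push μ K y) ^ α
        ≤ push μ K y * ∑ x, (μ x * K x y / push μ K y) * (ν x / μ x) ^ α :=
          mul_le_mul_of_nonneg_left h hP.le
      _ = ∑ x, μ x * K x y * (ν x / μ x) ^ α := by
          rw [Finset.mul_sum]
          refine Finset.sum_congr rfl fun x _ => ?_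
          field_simp
  calc ∑ y, push μ K y * (push ν K y / push μ K y) ^ α
      ≤ ∑ y, ∑ x, μ x * K x y * (ν x / μ x) ^ α := Finset.sum_le_sum fun y _ => key y
    _ = ∑ x, μ x * (ν x / μ x) ^ α := by
        rw [Finset.sum_comm]
        refine Finset.sum_congr rfl fun x _ => ?_
        have : ∀ y : Y, μ x * K x y * (ν x / μ x) ^ α
            = (μ x * (ν x / μ x) ^ α) * K x y := fun y => by ring
        simp only [this, ← Finset.mul_sum, hK.2 x, mul_one]

lemma sum_rpow_one_le {ν μ : X → ℝ} (hν : IsProbDist ν) (hμ : IsProbDist μ)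
    (hμpos : ∀ x, 0 < μ x) {α : ℝ} (hα : 1 ≤ α) :
    1 ≤ ∑ x, μ x * (ν x / μ x) ^ α := by
  refine jensen_rpow_one_le μ (fun x => ν x / μ x) (fun x => (hμpos x).le)
    (fun x => div_nonneg (hν.1 x) (hμpos x).le) ?_ hμ.2 hα
  calc ∑ x, μ x * (ν x / μ x) = ∑ x, ν x := by
        refine Finset.sum_congr rfl fun x _ => ?_
        rw [mul_div_cancel₀ _ (hμpos x).ne']
    _ = 1 := hν.2

lemma push_isProbDist {K : X → Y → ℝ} (hK : IsKernel K) {ν : X → ℝ} (hν : IsProbDist ν) :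
    IsProbDist (push ν K) :=
  ⟨fun y => Finset.sum_nonneg fun x _ => mul_nonneg (hν.1 x) (hK.1 x y),
    push_sum_one hK hν⟩

lemma etaAlpha_bddAbove (K : X → Y → ℝ) (hK : IsKernel K) (μ : X → ℝ) (hμ : IsProbDist μ)
    (hμpos : ∀ x, 0 < μ x) (hout : ∀ y, 0 < push μ K y) {α : ℝ} (hα : 1 < α) :
    BddAbove {r : ℝ | ∃ ν : X → ℝ, IsProbDist ν ∧ ν ≠ μ ∧
      r = renyiD α (push ν K) (push μ K) / renyiD α ν μ} := by
  refine ⟨1, fun r hr => ?_⟩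
  obtain ⟨ν, hν, -, rfl⟩ := hr
  have hg1 : 1 ≤ ∑ x, μ x * (ν x / μ x) ^ α := sum_rpow_one_le hν hμ hμpos hα.le
  have hf1 : 1 ≤ ∑ y, push μ K y * (push ν K y / push μ K y) ^ α :=
    sum_rpow_one_le (push_isProbDist hK hν) (push_isProbDist hK hμ) hout hα.le
  have hfg := dpi_sum_le hK hν hμpos hout hα.le
  have hαinv : (0:ℝ) ≤ (α - 1)⁻¹ := by
    have : (0:ℝ) < α - 1 := by linarith
    positivity
  have hlog : Real.log (∑ y, push μ K y * (push ν K y / push μ K y) ^ α)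
      ≤ Real.log (∑ x, μ x * (ν x / μ x) ^ α) :=
    Real.log_le_log (lt_of_lt_of_le one_pos hf1) hfg
  have hfle : renyiD α (push ν K) (push μ K) ≤ renyiD α ν μ :=
    mul_le_mul_of_nonneg_left hlog hαinv
  have hgnn : 0 ≤ renyiD α ν μ :=
    mul_nonneg hαinv (Real.log_nonneg hg1)
  exact div_le_one_of_le₀ hfle hgnn


end AuxSDPI

/-- Theorem 2 (Lower bound, Version 2): for an `n × m` row-stochastic matrix `K`
and a strictly positive distribution `μ` on an alphabet of size `n ≥ 2` with `μK`
strictly positive,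
`η_α(μ, K) ≥ max_{i ≠ ℓ} (μᵢ μ_ℓ/(μᵢ + μ_ℓ)) ∑ⱼ (K_{ij} - K_{ℓj})²/(μK)ⱼ`. -/
theorem sdpi_renyi_lower_bound_v2
    (n m : ℕ) (hn : 2 ≤ n)
    (K : Fin n → Fin m → ℝ) (hK : IsKernel K)
    (μ : Fin n → ℝ) (hμ : IsProbDist μ) (hμpos : ∀ i, 0 < μ i)
    (hout : ∀ j, 0 < push μ K j)
    (α : ℝ) (hα : 1 < α) :
    ∀ i ℓ : Fin n, i ≠ ℓ →
      μ i * μ ℓ / (μ i + μ ℓ) * ∑ j, (K i j - K ℓ j) ^ 2 / push μ K j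
        ≤ etaAlpha α μ K := by
  intro i ℓ hiℓ
  classical
  -- perturbation direction
  set e : Fin n → ℝ := fun x => (if x = i then (1:ℝ) else 0) - (if x = ℓ then 1 else 0)
    with he
  have hei : e i = 1 := by simp [he, hiℓ]
  have heℓ : e ℓ = -1 := by simp [he, Ne.symm hiℓ]
  have hex0 : ∀ x, x ≠ i → x ≠ ℓ → e x = 0 := by
    intro x h1 h2; simp [he, h1, h2]
  have hsum_e : ∑ x, e x = 0 := by
    simp [he, Finset.sum_sub_distrib, Finset.sum_ite_eq']
  have heK : ∀ y, ∑ x, e x * K x y = K i y - K ℓ y := by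
    intro y
    simp [he, sub_mul, Finset.sum_sub_distrib, ite_mul, Finset.sum_ite_eq']
  have hP1 : ∑ y, push μ K y = 1 := push_sum_one hK hμ
  -- the two c-vectors
  set cG : Fin n → ℝ := fun x => e x / μ x with hcG
  set cF : Fin m → ℝ := fun y => (K i y - K ℓ y) / push μ K y with hcF
  have hG0 : ∑ x, μ x * cG x = 0 := by
    rw [← hsum_e]
    refine Finset.sum_congr rfl fun x _ => ?_
    rw [hcG]; rw [mul_comm, div_mul_cancel₀ _ (hμpos x).ne']
  have hG2 : ∑ x, μ x * cG x ^ 2 = (μ i)⁻¹ + (μ ℓ)⁻¹ := by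
    have hterm : ∀ x : Fin n, μ x * cG x ^ 2
        = (if x = i then (μ i)⁻¹ else 0) + (if x = ℓ then (μ ℓ)⁻¹ else 0) := by
      intro x
      rcases eq_or_ne x i with rfl | hxi
      · rw [if_pos rfl, if_neg hiℓ, add_zero, hcG]
        simp only [hei]
        field_simp [(hμpos x).ne']
      · rcases eq_or_ne x ℓ with rfl | hxl
        · rw [if_neg hxi, if_pos rfl, zero_add, hcG]
          simp only [heℓ]
          field_simp [(hμpos x).ne']
        · rw [if_neg hxi, if_neg hxl, add_zero, hcG]
          simp [hex0 x hxi hxl]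
    simp [hterm, Finset.sum_add_distrib, Finset.sum_ite_eq']
  have hPcF : ∀ y, push μ K y * cF y = K i y - K ℓ y := fun y => by
    rw [hcF]; rw [mul_comm, div_mul_cancel₀ _ (hout y).ne']
  have hF0 : ∑ y, push μ K y * cF y = 0 := by
    simp only [hPcF, Finset.sum_sub_distrib, hK.2 i, hK.2 ℓ, sub_self]
  have hF2 : ∑ y, push μ K y * cF y ^ 2 = ∑ j, (K i j - K ℓ j) ^ 2 / push μ K j := by
    refine Finset.sum_congr rfl fun y _ => ?_
    rw [hcF]
    field_simp [(hout y).ne']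
  -- limits
  have hFten := aux_tendsto (push μ K) cF hout hP1 hF0 hα
  have hGten := aux_tendsto μ cG hμpos hμ.2 hG0 hα
  rw [hF2] at hFten
  rw [hG2] at hGten
  set A : ℝ := ∑ j, (K i j - K ℓ j) ^ 2 / push μ K j with hA
  set B : ℝ := (μ i)⁻¹ + (μ ℓ)⁻¹ with hB
  have hk : (0:ℝ) < α * (α - 1) / 2 := by nlinarith
  have hBpos : 0 < B := by
    rw [hB]
    have h1 := hμpos i; have h2 := hμpos ℓ
    positivity
  have hratio := hFten.div hGten (mul_pos hk hBpos).ne'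
  have hval : (α * (α - 1) / 2 * A) / (α * (α - 1) / 2 * B)
      = μ i * μ ℓ / (μ i + μ ℓ) * A := by
    have h1 := (hμpos i).ne'
    have h2 := (hμpos ℓ).ne'
    have h3 : μ i + μ ℓ ≠ 0 := by
      have := hμpos i; have := hμpos ℓ; intro h; linarith
    have key : (μ i)⁻¹ + (μ ℓ)⁻¹ = (μ i + μ ℓ) / (μ i * μ ℓ) := by
      field_simp
      ring
    rw [mul_div_mul_left _ _ hk.ne', hB, key, div_div_eq_mul_div]
    ring
  rw [hval] at hratio
  -- membership eventually
  have hIoo : Set.Ioo (0:ℝ) (μ ℓ) ∈ 𝓝[>] (0:ℝ) :=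
    Ioo_mem_nhdsGT_of_mem ⟨le_rfl, hμpos ℓ⟩
  have hmem : ∀ᶠ t in 𝓝[>] (0:ℝ),
      (Real.log (∑ y, push μ K y * (1 + t * cF y) ^ α) / t ^ 2) /
        (Real.log (∑ x, μ x * (1 + t * cG x) ^ α) / t ^ 2) ∈
      {r : ℝ | ∃ ν : Fin n → ℝ, IsProbDist ν ∧ ν ≠ μ ∧
        r = renyiD α (push ν K) (push μ K) / renyiD α ν μ} := by
    filter_upwards [hIoo] with t ht
    refine ⟨fun x => μ x + t * e x, ⟨?_, ?_⟩, ?_, ?_⟩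
    · intro x
      show (0:ℝ) ≤ μ x + t * e x
      rcases eq_or_ne x i with rfl | hxi
      · rw [hei]; have := hμpos x; linarith [ht.1]
      · rcases eq_or_ne x ℓ with rfl | hxl
        · rw [heℓ]; have := ht.2; linarith
        · rw [hex0 x hxi hxl]; have := hμpos x; linarith
    · show (∑ x, (μ x + t * e x)) = 1
      rw [Finset.sum_add_distrib, ← Finset.mul_sum, hsum_e, mul_zero, add_zero, hμ.2]
    · intro h
      have h9 := congrFun h i
      simp only [hei, mul_one] at h9
      linarith [ht.1]
    · -- value equality
      have hpush : ∀ y, push (fun x => μ x + t * e x) K y = push μ K y * (1 + t * cF y) := by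
        intro y
        have hps : push (fun x => μ x + t * e x) K y = push μ K y + t * (K i y - K ℓ y) := by
          calc push (fun x => μ x + t * e x) K y
              = (∑ x, μ x * K x y) + ∑ x, t * (e x * K x y) := by
                rw [push, ← Finset.sum_add_distrib]
                exact Finset.sum_congr rfl fun x _ => by ring
            _ = push μ K y + t * (K i y - K ℓ y) := by
                rw [← Finset.mul_sum, heK y]; rfl
        rw [hps, mul_add, mul_one]
        linear_combination (-t) * hPcF y
      have hdivF : ∀ y, push (fun x => μ x + t * e x) K y / push μ K y = 1 + t * cF y :=
        fun y => by rw [hpush y, mul_div_cancel_left₀ _ (hout y).ne']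
      have hdivG : ∀ x, (μ x + t * e x) / μ x = 1 + t * cG x := by
        intro x
        rw [add_div, div_self (hμpos x).ne', hcG, mul_div_assoc]
      rw [renyiD, renyiD]
      have e1 : ∑ y, push μ K y * (push (fun x => μ x + t * e x) K y / push μ K y) ^ α
          = ∑ y, push μ K y * (1 + t * cF y) ^ α :=
        Finset.sum_congr rfl fun y _ => by rw [hdivF y]
      have e2 : ∑ x, μ x * ((μ x + t * e x) / μ x) ^ α
          = ∑ x, μ x * (1 + t * cG x) ^ α :=
        Finset.sum_congr rfl fun x _ => by rw [hdivG x]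
      rw [e1, e2]
      have hαne : ((α:ℝ) - 1)⁻¹ ≠ 0 := inv_ne_zero (by intro h; rw [sub_eq_zero] at h; linarith)
      rw [mul_div_mul_left _ _ hαne]
      rw [div_div_div_comm, div_self (pow_ne_zero 2 (ne_of_gt ht.1)), div_one]
  -- conclude
  show _ ≤ etaAlpha α μ K
  unfold etaAlpha
  have hbdd := etaAlpha_bddAbove K hK μ hμ hμpos hout hα
  refine le_of_forall_pos_le_add fun ε hε => ?_
  have hev2 := hratio.eventually (eventually_gt_nhds
    (by linarith : μ i * μ ℓ / (μ i + μ ℓ) * A - ε < μ i * μ ℓ / (μ i + μ ℓ) * A))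
  obtain ⟨t, htS, htgt⟩ := (hmem.and hev2).exists
  simp only [Pi.div_apply] at htgt
  have hle := le_csSup hbdd htS
  linarith
end
end

section
/- Let K be the Markov kernel induced by an n × m row-stochastic matrix (K_{ij}) with n ≥ 2, and let μ = (μ_1, …, μ_n) be a strictly positive probability distribution on an alphabet of size n such that μK is strictly positive. Then the SDPI constant for Kullback–Leibler divergence satisfies η_{KL}(μ, K) ≥ max_{1 ≤ i ≠ ℓ ≤ n} (μ_i μ_ℓ / (μ_i + μ_ℓ)) · Σ_{j=1}^m (K_{ij} − K_{ℓj})² / (μK)_j, where (μK)_j = Σ_{i=1}^n μ_i K_{ij}. -/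
open scoped BigOperators

noncomputable section

section KLDefs

variable {X Y : Type*} [Fintype X] [Fintype Y]

/-- Kullback–Leibler divergence `D_{KL}(ν‖μ) = ∑ₓ ν(x) log(ν(x)/μ(x))`
(with the convention `0 log 0 = 0`, which holds automatically since
`Real.log 0 = 0` in Mathlib). -/
def klD (ν μ : X → ℝ) : ℝ := ∑ x, ν x * Real.log (ν x / μ x)

/-- SDPI constant of the KL divergence for the pair `(μ, K)`. -/
def etaKL (μ : X → ℝ) (K : X → Y → ℝ) : ℝ :=
  sSup {r : ℝ | ∃ ν : X → ℝ, IsProbDist ν ∧ ν ≠ μ ∧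
    r = klD (push ν K) (push μ K) / klD ν μ}

end KLDefs


open Real Filter Topology

lemma elem_le {x y : ℝ} (hx : 0 ≤ x) (hy : 0 ≤ y) (h0 : y = 0 → x = 0) :
    x - y ≤ x * Real.log (x / y) := by
  rcases eq_or_lt_of_le hx with hx0 | hx0
  · simp [← hx0]; linarith
  · have hy0 : 0 < y := lt_of_le_of_ne hy (fun h => by simp [h0 h.symm] at hx0)
    have h := Real.log_le_sub_one_of_pos (show 0 < y / x by positivity)
    have hlog : Real.log (y / x) = - Real.log (x / y) := by
      rw [← Real.log_inv]; congr 1; field_simp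
    rw [hlog] at h
    have h2 : x * (-Real.log (x/y)) ≤ x * (y/x - 1) := mul_le_mul_of_nonneg_left h hx0.le
    have h3 : x * (y/x - 1) = y - x := by field_simp
    linarith

lemma elem_lt {x y : ℝ} (hx : 0 ≤ x) (hy : 0 < y) (hne : x ≠ y) :
    x - y < x * Real.log (x / y) := by
  rcases eq_or_lt_of_le hx with hx0 | hx0
  · simp [← hx0]; linarith
  · have h := Real.log_lt_sub_one_of_pos (show 0 < y / x by positivity)
      (by intro h; apply hne; field_simp at h; linarith)
    have hlog : Real.log (y / x) = - Real.log (x / y) := by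
      rw [← Real.log_inv]; congr 1; field_simp
    rw [hlog] at h
    have h2 : x * (-Real.log (x/y)) < x * (y/x - 1) := by
      exact mul_lt_mul_of_pos_left h hx0
    have h3 : x * (y/x - 1) = y - x := by field_simp
    linarith

lemma log_sum_ineq {ι : Type*} [Fintype ι] (a b : ι → ℝ) (ha : ∀ i, 0 ≤ a i)
    (hb : ∀ i, 0 ≤ b i) (h0 : ∀ i, b i = 0 → a i = 0) (hB : 0 < ∑ i, b i) :
    (∑ i, a i) * Real.log ((∑ i, a i) / (∑ i, b i)) ≤ ∑ i, a i * Real.log (a i / b i) := by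
  set A := ∑ i, a i with hA
  set B := ∑ i, b i with hBdef
  rcases eq_or_lt_of_le (Finset.sum_nonneg (fun i _ => ha i) : (0:ℝ) ≤ A) with hA0 | hA0
  · have hall : ∀ i, a i = 0 := by
      intro i
      have := (Finset.sum_eq_zero_iff_of_nonneg (fun i _ => ha i)).1 hA0.symm
      exact this i (Finset.mem_univ i)
    rw [show A = 0 from hA0.symm]
    simp [hall]
  · have hAB : 0 < A / B := div_pos hA0 hB
    have key : ∀ i, a i - b i * (A / B) ≤ a i * Real.log (a i / b i) - a i * Real.log (A / B) := by
      intro i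
      rcases eq_or_lt_of_le (ha i) with hai | hai
      · have hy : 0 ≤ b i * (A / B) := mul_nonneg (hb i) hAB.le
        simp [← hai]
        linarith
      · have hbi : 0 < b i := by
          rcases eq_or_lt_of_le (hb i) with h | h
          · exact absurd (h0 i h.symm) hai.ne'
          · exact h
        have hy : 0 < b i * (A / B) := mul_pos hbi hAB
        have h := elem_le (x := a i) (y := b i * (A / B)) (ha i) hy.le
          (fun h => absurd h hy.ne')
        refine h.trans_eq ?_
        have harg : a i / (b i * (A / B)) = (a i / b i) / (A / B) := by
          field_simp
        rw [harg, Real.log_div (ne_of_gt (div_pos hai hbi)) hAB.ne', mul_sub]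
    have hsum := Finset.sum_le_sum (s := Finset.univ) (fun i _ => key i)
    rw [Finset.sum_sub_distrib, Finset.sum_sub_distrib, ← Finset.sum_mul, ← Finset.sum_mul,
      ← hA, ← hBdef] at hsum
    have hBA : B * (A / B) = A := by field_simp
    linarith

lemma key_lim {a : ℝ} (ha : 0 < a) :
    Tendsto (fun t => ((a + t) * Real.log ((a + t) / a) - t) / t ^ 2)
      (𝓝[≠] (0:ℝ)) (𝓝 (1 / (2 * a))) := by
  have hf : ∀ t ∈ Set.Ioo (-a) a,
      HasDerivAt (fun t => (a + t) * Real.log ((a + t) / a) - t)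
        (Real.log ((a + t) / a)) t := by
    intro t ht
    have hat : 0 < a + t := by linarith [ht.1]
    have h1 : HasDerivAt (fun t : ℝ => (a + t) / a) (1 / a) t :=
      ((hasDerivAt_id t).const_add a).div_const a
    have h2 := (Real.hasDerivAt_log (ne_of_gt (div_pos hat ha))).comp t h1
    have h3 : ((a + t) / a)⁻¹ * (1 / a) = (a + t)⁻¹ := by
      field_simp
    rw [h3] at h2
    have h4 : HasDerivAt (fun t : ℝ => a + t) 1 t := (hasDerivAt_id t).const_add a
    have h5 := (h4.mul h2).sub (hasDerivAt_id t)
    rw [show (1 * (Real.log ∘ fun t => (a + t) / a) t + (a + t) * (a + t)⁻¹ - 1)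
      = Real.log ((a + t) / a) by simp [hat.ne']] at h5
    exact h5
  have hmem : Set.Ioo (-a) a ∈ 𝓝[≠] (0:ℝ) :=
    nhdsWithin_le_nhds (Ioo_mem_nhds (by linarith) ha)
  have hL : HasDerivAt (fun t : ℝ => Real.log ((a + t) / a)) (1 / a) 0 := by
    have h1 : HasDerivAt (fun t : ℝ => (a + t) / a) (1 / a) 0 :=
      ((hasDerivAt_id 0).const_add a).div_const a
    have h2 := (Real.hasDerivAt_log (x := (a + 0) / a)
      (ne_of_gt (div_pos (by linarith) ha))).comp 0 h1
    rw [show a + (0:ℝ) = a by ring, div_self ha.ne', inv_one, one_mul] at h2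
    exact h2
  apply HasDerivAt.lhopital_zero_nhdsNE
    (f' := fun t => Real.log ((a + t) / a)) (g' := fun t => 2 * t)
  · exact Filter.eventually_of_mem hmem hf
  · refine Filter.Eventually.of_forall (fun t => ?_)
    simpa using hasDerivAt_pow 2 t
  · filter_upwards [self_mem_nhdsWithin] with t ht
    have : t ≠ 0 := ht
    positivity
  · have hc : ContinuousAt (fun t : ℝ => (a + t) * Real.log ((a + t) / a) - t) 0 :=
      (hf 0 ⟨by linarith, ha⟩).continuousAt
    have := hc.tendsto.mono_left (nhdsWithin_le_nhds (s := {(0:ℝ)}ᶜ))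
    convert this using 2
    rw [show a + (0:ℝ) = a by ring, div_self ha.ne']
    simp
  · have : Tendsto (fun t : ℝ => t ^ 2) (𝓝 0) (𝓝 0) := by
      simpa using (continuous_pow 2).tendsto (0:ℝ)
    exact this.mono_left nhdsWithin_le_nhds
  · have hs := hasDerivAt_iff_tendsto_slope.1 hL
    have h2 := hs.const_mul (1/2 : ℝ)
    have heq : (fun t : ℝ => (1/2 : ℝ) * slope (fun t : ℝ => Real.log ((a + t) / a)) 0 t)
        = fun t => Real.log ((a + t) / a) / (2 * t) := by
      funext t
      rw [slope_def_field]
      rw [show a + (0:ℝ) = a by ring, div_self ha.ne', Real.log_one]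
      ring
    rw [heq] at h2
    convert h2 using 2
    ring

lemma key_lim2 {a : ℝ} (ha : 0 < a) (d : ℝ) :
    Tendsto (fun t => ((a + t * d) * Real.log ((a + t * d) / a) - t * d) / t ^ 2)
      (𝓝[>] (0:ℝ)) (𝓝 (d ^ 2 / (2 * a))) := by
  rcases eq_or_ne d 0 with rfl | hd
  · simp [div_self ha.ne']
  · have hcomp : Tendsto (fun t : ℝ => t * d) (𝓝[>] (0:ℝ)) (𝓝[≠] (0:ℝ)) := by
      rw [tendsto_nhdsWithin_iff]
      constructor
      · have h1 : Tendsto (fun t : ℝ => t * d) (𝓝 0) (𝓝 (0 * d)) :=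
          (tendsto_id.mul_const d)
        rw [zero_mul] at h1
        exact h1.mono_left nhdsWithin_le_nhds
      · filter_upwards [self_mem_nhdsWithin] with t ht
        exact Set.mem_compl_singleton_iff.2 (mul_ne_zero (ne_of_gt ht) hd)
    have h1 := ((key_lim ha).comp hcomp).const_mul (d ^ 2)
    have heq : ∀ t : ℝ, d ^ 2 * (((a + t * d) * Real.log ((a + t * d) / a) - t * d)
        / (t * d) ^ 2) = ((a + t * d) * Real.log ((a + t * d) / a) - t * d) / t ^ 2 := by
      intro t
      rcases eq_or_ne t 0 with rfl | ht
      · simp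
      · rw [mul_pow, ← div_div, mul_comm (d^2)]
        exact div_mul_cancel₀ _ (pow_ne_zero 2 hd)
    have h2 := h1.congr heq
    rwa [mul_one_div] at h2

section Aux
variable {X Y : Type*} [Fintype X] [Fintype Y]

lemma klD_nonneg {ν μ : X → ℝ} (hν0 : ∀ x, 0 ≤ ν x) (hν1 : ∑ x, ν x = 1)
    (hμ1 : ∑ x, μ x = 1) (hμpos : ∀ x, 0 < μ x) : 0 ≤ klD ν μ := by
  have h : ∀ x, ν x - μ x ≤ ν x * Real.log (ν x / μ x) := fun x =>
    elem_le (hν0 x) (hμpos x).le (fun h => absurd h (hμpos x).ne')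
  have := Finset.sum_le_sum (s := Finset.univ) (fun x _ => h x)
  rw [Finset.sum_sub_distrib, hν1, hμ1] at this
  simpa [klD] using this

lemma klD_pos {ν μ : X → ℝ} (hν : IsProbDist ν) (hμ1 : ∑ x, μ x = 1)
    (hμpos : ∀ x, 0 < μ x) (hne : ν ≠ μ) : 0 < klD ν μ := by
  obtain ⟨x₀, hx₀⟩ := Function.ne_iff.1 hne
  have h : ∀ x ∈ Finset.univ, ν x - μ x ≤ ν x * Real.log (ν x / μ x) := fun x _ =>
    elem_le (hν.1 x) (hμpos x).le (fun h => absurd h (hμpos x).ne')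
  have hlt := Finset.sum_lt_sum h ⟨x₀, Finset.mem_univ x₀,
    elem_lt (hν.1 x₀) (hμpos x₀) hx₀⟩
  rw [Finset.sum_sub_distrib, hν.2, hμ1] at hlt
  simpa [klD] using hlt

lemma klD_dpi {ν μ : X → ℝ} {K : X → Y → ℝ} (hν : IsProbDist ν) (hK : IsKernel K)
    (hμpos : ∀ x, 0 < μ x) (hout : ∀ y, 0 < push μ K y) :
    klD (push ν K) (push μ K) ≤ klD ν μ := by
  have step1 : ∀ y, push ν K y * Real.log (push ν K y / push μ K y) ≤
      ∑ x, (ν x * K x y) * Real.log ((ν x * K x y) / (μ x * K x y)) := by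
    intro y
    exact log_sum_ineq (fun x => ν x * K x y) (fun x => μ x * K x y)
      (fun x => mul_nonneg (hν.1 x) (hK.1 x y))
      (fun x => mul_nonneg (hμpos x).le (hK.1 x y))
      (fun x h => by
        rcases mul_eq_zero.1 h with h | h
        · exact absurd h (hμpos x).ne'
        · simp [h])
      (hout y)
  calc klD (push ν K) (push μ K)
      ≤ ∑ y, ∑ x, (ν x * K x y) * Real.log ((ν x * K x y) / (μ x * K x y)) :=
        Finset.sum_le_sum (s := Finset.univ) (fun y _ => step1 y)
    _ = ∑ x, ∑ y, (ν x * K x y) * Real.log ((ν x * K x y) / (μ x * K x y)) :=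
        Finset.sum_comm
    _ = klD ν μ := by
        unfold klD
        apply Finset.sum_congr rfl
        intro x _
        have : ∀ y, (ν x * K x y) * Real.log ((ν x * K x y) / (μ x * K x y)) =
            (ν x * Real.log (ν x / μ x)) * K x y := by
          intro y
          rcases eq_or_lt_of_le (hK.1 x y) with h | h
          · simp [← h]
          · rw [mul_div_mul_right _ _ h.ne']
            ring
        simp_rw [this]
        rw [← Finset.mul_sum, hK.2 x, mul_one]

lemma etaKL_bddAbove {μ : X → ℝ} {K : X → Y → ℝ} (hK : IsKernel K)
    (hμ : IsProbDist μ) (hμpos : ∀ x, 0 < μ x) (hout : ∀ y, 0 < push μ K y) :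
    BddAbove {r : ℝ | ∃ ν : X → ℝ, IsProbDist ν ∧ ν ≠ μ ∧
      r = klD (push ν K) (push μ K) / klD ν μ} := by
  refine ⟨1, ?_⟩
  rintro r ⟨ν, hν, hne, rfl⟩
  have hpos := klD_pos hν hμ.2 hμpos hne
  rw [div_le_one hpos]
  exact klD_dpi hν hK hμpos hout

end Aux

/-- Taking `α ↓ 1` in Theorem 2: the closed-form lower bound also holds for the
SDPI constant of the KL divergence:
`η_{KL}(μ, K) ≥ max_{i ≠ ℓ} (μᵢ μ_ℓ/(μᵢ + μ_ℓ)) ∑ⱼ (K_{ij} - K_{ℓj})²/(μK)ⱼ`. -/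
theorem sdpi_kl_lower_bound_v2
    (n m : ℕ) (hn : 2 ≤ n)
    (K : Fin n → Fin m → ℝ) (hK : IsKernel K)
    (μ : Fin n → ℝ) (hμ : IsProbDist μ) (hμpos : ∀ i, 0 < μ i)
    (hout : ∀ j, 0 < push μ K j) :
    ∀ i ℓ : Fin n, i ≠ ℓ →
      μ i * μ ℓ / (μ i + μ ℓ) * ∑ j, (K i j - K ℓ j) ^ 2 / push μ K j
        ≤ etaKL μ K := by
  intro i ℓ hil
  classical
  set d : Fin n → ℝ := fun x => (if x = i then (1:ℝ) else 0) - (if x = ℓ then 1 else 0) with hd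
  have hdi : d i = 1 := by simp [hd, hil]
  have hdl : d ℓ = -1 := by simp [hd, Ne.symm hil]
  have hdsum : ∑ x, d x = 0 := by
    simp [hd, Finset.sum_sub_distrib]
  have hcsum : ∑ j, (K i j - K ℓ j) = 0 := by
    rw [Finset.sum_sub_distrib, hK.2 i, hK.2 ℓ, sub_self]
  set ν : ℝ → Fin n → ℝ := fun t x => μ x + t * d x with hν
  have hpush : ∀ t j, push (ν t) K j = push μ K j + t * (K i j - K ℓ j) := by
    intro t j
    have hsum : ∑ x, d x * K x j = K i j - K ℓ j := by
      simp [hd, sub_mul, Finset.sum_sub_distrib, ite_mul, Finset.sum_ite_eq']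
    calc push (ν t) K j = ∑ x, (μ x * K x j + t * (d x * K x j)) := by
          simp only [hν, push]
          apply Finset.sum_congr rfl
          intro x _
          ring
      _ = push μ K j + t * (K i j - K ℓ j) := by
          rw [Finset.sum_add_distrib, ← Finset.mul_sum, hsum]
          rfl
  have hprob : ∀ t ∈ Set.Ioo (0:ℝ) (μ ℓ), IsProbDist (ν t) := by
    intro t ht
    constructor
    · intro x
      rcases eq_or_ne x ℓ with rfl | hx
      · simp only [hν]
        rw [hdl]
        linarith [ht.2]
      · have hd0 : 0 ≤ d x := by
          simp only [hd, hx, if_false, sub_zero]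
          split <;> norm_num
        have := mul_nonneg ht.1.le hd0
        simp only [hν]
        linarith [hμpos x]
    · simp only [hν]
      rw [Finset.sum_add_distrib, hμ.2, ← Finset.mul_sum, hdsum, mul_zero, add_zero]
  have hnemu : ∀ t ∈ Set.Ioo (0:ℝ) (μ ℓ), ν t ≠ μ := by
    intro t ht h
    have h2 := congrFun h i
    simp only [hν] at h2
    rw [hdi, mul_one] at h2
    linarith [ht.1]
  have hDen : Tendsto (fun t => klD (ν t) μ / t ^ 2) (𝓝[>] (0:ℝ))
      (𝓝 (∑ x, d x ^ 2 / (2 * μ x))) := by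
    have hsum := tendsto_finset_sum Finset.univ
      (fun (x : Fin n) _ => key_lim2 (hμpos x) (d x))
    refine hsum.congr (fun t => ?_)
    rw [← Finset.sum_div]
    congr 1
    rw [Finset.sum_sub_distrib, ← Finset.mul_sum, hdsum, mul_zero, sub_zero]
    simp only [klD, hν]
  have hNum : Tendsto (fun t => klD (push (ν t) K) (push μ K) / t ^ 2) (𝓝[>] (0:ℝ))
      (𝓝 (∑ j, (K i j - K ℓ j) ^ 2 / (2 * push μ K j))) := by
    have hsum := tendsto_finset_sum Finset.univ
      (fun (j : Fin m) _ => key_lim2 (hout j) (K i j - K ℓ j))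
    refine hsum.congr (fun t => ?_)
    rw [← Finset.sum_div]
    congr 1
    rw [Finset.sum_sub_distrib, ← Finset.mul_sum, hcsum, mul_zero, sub_zero]
    simp only [klD, hpush]
  have hDpos : 0 < ∑ x, d x ^ 2 / (2 * μ x) := by
    refine Finset.sum_pos' (fun x _ => div_nonneg (sq_nonneg _) (by linarith [hμpos x])) ⟨i, Finset.mem_univ i, ?_⟩
    rw [hdi]
    have := hμpos i
    positivity
  have hIoo : Set.Ioo (0:ℝ) (μ ℓ) ∈ 𝓝[>] (0:ℝ) :=
    Ioo_mem_nhdsGT_of_mem ⟨le_refl 0, hμpos ℓ⟩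
  have hratio : Tendsto (fun t => klD (push (ν t) K) (push μ K) / klD (ν t) μ)
      (𝓝[>] (0:ℝ))
      (𝓝 ((∑ j, (K i j - K ℓ j) ^ 2 / (2 * push μ K j)) / (∑ x, d x ^ 2 / (2 * μ x)))) := by
    refine (hNum.div hDen hDpos.ne').congr' ?_
    filter_upwards [hIoo] with t ht
    have ht0 : (t:ℝ) ^ 2 ≠ 0 := pow_ne_zero 2 (ne_of_gt ht.1)
    have hDt : klD (ν t) μ ≠ 0 := (klD_pos (hprob t ht) hμ.2 hμpos (hnemu t ht)).ne'
    rw [Pi.div_apply]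
    field_simp
    rw [mul_div_assoc, div_self ht.1.ne', mul_one]
  have hmemS : ∀ᶠ t in 𝓝[>] (0:ℝ),
      klD (push (ν t) K) (push μ K) / klD (ν t) μ ≤ etaKL μ K := by
    filter_upwards [hIoo] with t ht
    exact le_csSup (etaKL_bddAbove hK hμ hμpos hout)
      ⟨ν t, hprob t ht, hnemu t ht, rfl⟩
  have final := le_of_tendsto hratio hmemS
  have hS : ∑ x, d x ^ 2 / (2 * μ x) = 1 / (2 * μ i) + 1 / (2 * μ ℓ) := by
    have hdx : ∀ x, d x ^ 2 = (if x = i then (1:ℝ) else 0) + (if x = ℓ then 1 else 0) := by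
      intro x
      by_cases h1 : x = i
      · subst h1
        rw [hdi, if_pos rfl, if_neg hil]
        norm_num
      · by_cases h2 : x = ℓ
        · subst h2
          rw [hdl, if_neg h1, if_pos rfl]
          norm_num
        · simp [hd, h1, h2]
    have key : ∀ k : Fin n, ∑ x, (if x = k then (1:ℝ) else 0) / (2 * μ x) = 1 / (2 * μ k) := by
      intro k
      rw [Finset.sum_eq_single k (fun b _ hb => by rw [if_neg hb, zero_div]) (by simp)]
      rw [if_pos rfl]
    simp_rw [hdx, add_div, Finset.sum_add_distrib]
    rw [key i, key ℓ]
  have heq : μ i * μ ℓ / (μ i + μ ℓ) * ∑ j, (K i j - K ℓ j) ^ 2 / push μ K j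
      = (∑ j, (K i j - K ℓ j) ^ 2 / (2 * push μ K j)) / (∑ x, d x ^ 2 / (2 * μ x)) := by
    rw [hS]
    have hnum : ∑ j, (K i j - K ℓ j) ^ 2 / (2 * push μ K j)
        = (∑ j, (K i j - K ℓ j) ^ 2 / push μ K j) / 2 := by
      rw [Finset.sum_div]
      apply Finset.sum_congr rfl
      intro j _
      rw [div_div, mul_comm]
    rw [hnum]
    have h1 := hμpos i
    have h2 := hμpos ℓ
    have h3 : 0 < μ i + μ ℓ := by linarith
    field_simp
    ring
  rw [heq]
  exact final
end
end

section
/- Let 0 < ε < 1/2, let μ = Ber(1/2) be the uniform distribution on {0,1}, and let K = BSC(ε) be the binary symmetric channel with crossover probability ε, i.e. the 2×2 stochastic matrix with diagonal entries 1−ε and off-diagonal entries ε. Then for every α with 1 < α < ∞, η_α(μ, K) ≥ (1 − 2ε)². -/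
open scoped BigOperators

noncomputable section

section Aux
open Real Filter Set Topology

namespace SDPIAux


/-- The moment generating quantity `A(u) = ((1+2u)^α + (1-2u)^α)/2`. -/
def Af (α u : ℝ) : ℝ := ((1 + 2*u) ^ α + (1 - 2*u) ^ α) / 2

def Af' (α u : ℝ) : ℝ := α * ((1 + 2*u) ^ (α-1) - (1 - 2*u) ^ (α-1))

def Af'' (α u : ℝ) : ℝ := 2*α*(α-1) * ((1 + 2*u) ^ (α-2) + (1 - 2*u) ^ (α-2))

variable {α : ℝ}

lemma Af_zero : Af α 0 = 1 := by
  norm_num [Af]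

lemma Af_even (u : ℝ) : Af α (-u) = Af α u := by
  unfold Af
  rw [show 1 + 2*(-u) = 1 - 2*u by ring, show 1 - 2*(-u) = 1 + 2*u by ring, add_comm]

lemma continuous_rpow_const (hα : 0 < α) : Continuous fun x : ℝ => x ^ α := by
  rw [continuous_iff_continuousAt]
  intro x
  exact Real.continuousAt_rpow_const x α (Or.inr hα.le)

lemma Af_continuous (hα : 0 < α) : Continuous (Af α) := by
  unfold Af
  exact (((continuous_rpow_const hα).comp (by continuity)).add
    ((continuous_rpow_const hα).comp (by continuity))).div_const 2

lemma hasDerivAt_inner1 (u : ℝ) : HasDerivAt (fun v : ℝ => 1 + 2*v) 2 u := by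
  simpa using ((hasDerivAt_id u).const_mul 2).const_add 1

lemma hasDerivAt_inner2 (u : ℝ) : HasDerivAt (fun v : ℝ => 1 - 2*v) (-2) u := by
  simpa using ((hasDerivAt_id u).const_mul 2).const_sub 1

lemma hasDerivAt_Af {u : ℝ} (h1 : (0:ℝ) < 1 + 2*u) (h2 : (0:ℝ) < 1 - 2*u) :
    HasDerivAt (Af α) (Af' α u) u := by
  have d1 : HasDerivAt (fun v : ℝ => (1 + 2*v) ^ α) (α * (1+2*u)^(α-1) * 2) u :=
    by have h := (Real.hasDerivAt_rpow_const (x := 1+2*u) (p := α) (Or.inl h1.ne')).comp u (hasDerivAt_inner1 u); exact h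
  have d2 : HasDerivAt (fun v : ℝ => (1 - 2*v) ^ α) (α * (1-2*u)^(α-1) * (-2)) u :=
    by have h := (Real.hasDerivAt_rpow_const (x := 1-2*u) (p := α) (Or.inl h2.ne')).comp u (hasDerivAt_inner2 u); exact h
  have h := (d1.add d2).div_const 2
  have heq : Af' α u = (α * (1+2*u)^(α-1) * 2 + α * (1-2*u)^(α-1) * (-2)) / 2 := by
    unfold Af'; ring
  rw [heq]
  exact h

lemma hasDerivAt_Af' {u : ℝ} (h1 : (0:ℝ) < 1 + 2*u) (h2 : (0:ℝ) < 1 - 2*u) :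
    HasDerivAt (Af' α) (Af'' α u) u := by
  have d1 : HasDerivAt (fun v : ℝ => (1 + 2*v) ^ (α-1)) ((α-1) * (1+2*u)^(α-1-1) * 2) u :=
    by have h := (Real.hasDerivAt_rpow_const (x := 1+2*u) (p := α-1) (Or.inl h1.ne')).comp u (hasDerivAt_inner1 u); exact h
  have d2 : HasDerivAt (fun v : ℝ => (1 - 2*v) ^ (α-1)) ((α-1) * (1-2*u)^(α-1-1) * (-2)) u :=
    by have h := (Real.hasDerivAt_rpow_const (x := 1-2*u) (p := α-1) (Or.inl h2.ne')).comp u (hasDerivAt_inner2 u); exact h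
  have h := (d1.sub d2).const_mul α
  have heq : Af'' α u = α * ((α-1) * (1+2*u)^(α-1-1) * 2 - (α-1) * (1-2*u)^(α-1-1) * (-2)) := by
    unfold Af''
    rw [show α - 1 - 1 = α - 2 by ring]
    ring
  rw [heq]
  exact h

lemma Af_strictMonoOn (hα : 1 < α) : StrictMonoOn (Af α) (Icc 0 (1/2)) := by
  apply strictMonoOn_of_deriv_pos (convex_Icc _ _) ((Af_continuous (by linarith)).continuousOn)
  intro u hu
  rw [interior_Icc] at hu
  have h1 : (0:ℝ) < 1 + 2*u := by nlinarith [hu.1]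
  have h2 : (0:ℝ) < 1 - 2*u := by nlinarith [hu.2]
  rw [(hasDerivAt_Af h1 h2).deriv]
  have hlt : (1 - 2*u)^(α-1) < (1+2*u)^(α-1) :=
    Real.rpow_lt_rpow h2.le (by linarith [hu.1]) (by linarith)
  have : 0 < (1+2*u)^(α-1) - (1-2*u)^(α-1) := sub_pos.mpr hlt
  unfold Af'
  exact mul_pos (by linarith) this

lemma Af_one_le (hα : 1 < α) {u : ℝ} (hu : u ∈ Icc (0:ℝ) (1/2)) : 1 ≤ Af α u := by
  rcases eq_or_lt_of_le hu.1 with h | h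
  · rw [← h, Af_zero]
  · have := (Af_strictMonoOn hα) (left_mem_Icc.mpr (by norm_num)) hu h
    rw [Af_zero] at this
    exact this.le

lemma Af_one_lt (hα : 1 < α) {u : ℝ} (hu : u ∈ Ioc (0:ℝ) (1/2)) : 1 < Af α u := by
  have := (Af_strictMonoOn hα) (left_mem_Icc.mpr (by norm_num)) ⟨hu.1.le, hu.2⟩ hu.1
  rwa [Af_zero] at this




lemma tendsto_one_add (c : ℝ) : Tendsto (fun u : ℝ => 1 + c*u) (𝓝 0) (𝓝 1) := by
  have : Tendsto (fun u : ℝ => 1 + c*u) (𝓝 0) (𝓝 (1 + c*0)) := by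
    exact (continuous_const.add (continuous_const.mul continuous_id)).tendsto 0
  simpa using this

lemma tendsto_rpow_comp (c p : ℝ) :
    Tendsto (fun u : ℝ => (1 + c*u) ^ p) (𝓝 0) (𝓝 1) := by
  have h := (Real.continuousAt_rpow_const 1 p (Or.inl one_ne_zero)).tendsto
  have := h.comp (tendsto_one_add c)
  simpa [Real.one_rpow, Function.comp_def] using this

lemma tendsto_Af''_half (hα : 1 < α) :
    Tendsto (fun u => Af'' α u / 2) (𝓝[>] (0:ℝ)) (𝓝 (2*α*(α-1))) := by
  have h1 := tendsto_rpow_comp 2 (α-2)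
  have h2 := tendsto_rpow_comp (-2) (α-2)
  have h2' : Tendsto (fun u : ℝ => (1 - 2*u) ^ (α-2)) (𝓝 0) (𝓝 1) := by
    refine h2.congr (fun u => by congr 1; ring)
  have hsum := ((h1.add h2').const_mul (2*α*(α-1))).div_const 2
  have : Tendsto (fun u => Af'' α u / 2) (𝓝 (0:ℝ)) (𝓝 (2*α*(α-1) * (1+1) / 2)) := by
    refine hsum.congr (fun u => ?_)
    unfold Af''
    ring
  rw [show 2*α*(α-1) * (1+1) / 2 = 2*α*(α-1) by ring] at this
  exact this.mono_left nhdsWithin_le_nhds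

lemma tendsto_Af'_zero (hα : 1 < α) :
    Tendsto (Af' α) (𝓝 (0:ℝ)) (𝓝 0) := by
  have h1 := tendsto_rpow_comp 2 (α-1)
  have h2 : Tendsto (fun u : ℝ => (1 - 2*u) ^ (α-1)) (𝓝 0) (𝓝 1) := by
    refine (tendsto_rpow_comp (-2) (α-1)).congr (fun u => by congr 1; ring)
  have := (h1.sub h2).const_mul α
  have h : Tendsto (Af' α) (𝓝 (0:ℝ)) (𝓝 (α * (1 - 1))) := by
    refine this.congr (fun u => ?_)
    unfold Af'
    ring
  simpa using h

lemma tendsto_Af'_div (hα : 1 < α) :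
    Tendsto (fun u => Af' α u / (2*u)) (𝓝[>] (0:ℝ)) (𝓝 (2*α*(α-1))) := by
  apply HasDerivAt.lhopital_zero_nhdsGT (f' := Af'' α) (g' := fun _ => (2:ℝ))
  · filter_upwards [Ioo_mem_nhdsGT_of_mem (by norm_num : (0:ℝ) ∈ Ico 0 (1/4))] with u hu
    exact hasDerivAt_Af' (by cases hu; linarith) (by cases hu; linarith)
  · filter_upwards with u
    simpa using (hasDerivAt_id u).const_mul 2
  · filter_upwards with u
    norm_num
  · exact (tendsto_Af'_zero hα).mono_left nhdsWithin_le_nhds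
  · have : Tendsto (fun u : ℝ => 2*u) (𝓝 0) (𝓝 (2*0)) :=
      (continuous_const.mul continuous_id).tendsto 0
    simpa using this.mono_left nhdsWithin_le_nhds
  · exact tendsto_Af''_half hα

lemma tendsto_B (hα : 1 < α) :
    Tendsto (fun u => (Af α u - 1) / u^2) (𝓝[>] (0:ℝ)) (𝓝 (2*α*(α-1))) := by
  apply HasDerivAt.lhopital_zero_nhdsGT (f' := Af' α) (g' := fun u => 2*u)
  · filter_upwards [Ioo_mem_nhdsGT_of_mem (by norm_num : (0:ℝ) ∈ Ico 0 (1/4))] with u hu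
    exact ((hasDerivAt_Af (by cases hu; linarith) (by cases hu; linarith)).sub_const 1)
  · filter_upwards with u
    simpa using hasDerivAt_pow 2 u
  · filter_upwards [self_mem_nhdsWithin] with u hu
    have : (0:ℝ) < u := hu
    positivity
  · have : Tendsto (fun u => Af α u - 1) (𝓝 (0:ℝ)) (𝓝 (Af α 0 - 1)) :=
      ((Af_continuous (by linarith)).tendsto 0).sub_const 1
    rw [Af_zero] at this
    simpa using this.mono_left nhdsWithin_le_nhds
  · have : Tendsto (fun u : ℝ => u^2) (𝓝 0) (𝓝 (0^2)) := (continuous_pow 2).tendsto 0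
    simpa using this.mono_left nhdsWithin_le_nhds
  · exact tendsto_Af'_div hα

lemma tendsto_logA (hα : 1 < α) :
    Tendsto (fun u => Real.log (Af α u) / u^2) (𝓝[>] (0:ℝ)) (𝓝 (2*α*(α-1))) := by
  have hlog : Tendsto (fun y : ℝ => Real.log y / (y-1)) (𝓝[≠] (1:ℝ)) (𝓝 1) := by
    have h := hasDerivAt_iff_tendsto_slope.mp (Real.hasDerivAt_log one_ne_zero)
    rw [inv_one] at h
    refine h.congr (fun y => ?_)
    simp [slope_def_field, Real.log_one]
  have hA1 : Tendsto (Af α) (𝓝[>] (0:ℝ)) (𝓝[≠] (1:ℝ)) := by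
    apply tendsto_nhdsWithin_of_tendsto_nhds_of_eventually_within
    · have := (Af_continuous (by linarith : (0:ℝ) < α)).tendsto 0
      rw [Af_zero] at this
      exact this.mono_left nhdsWithin_le_nhds
    · filter_upwards [Ioo_mem_nhdsGT_of_mem (by norm_num : (0:ℝ) ∈ Ico 0 (1/2))] with u hu
      exact (Af_one_lt hα ⟨hu.1, hu.2.le⟩).ne'
  have h1 : Tendsto (fun u => Real.log (Af α u) / (Af α u - 1)) (𝓝[>] (0:ℝ)) (𝓝 1) :=
    hlog.comp hA1
  have h3 := h1.mul (tendsto_B hα)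
  rw [one_mul] at h3
  refine Filter.Tendsto.congr' ?_ h3
  filter_upwards [Ioo_mem_nhdsGT_of_mem (by norm_num : (0:ℝ) ∈ Ico 0 (1/2))] with u hu
  have hd : Af α u - 1 ≠ 0 := sub_ne_zero.mpr (Af_one_lt hα ⟨hu.1, hu.2.le⟩).ne'
  rw [div_mul_div_comm, mul_comm (Real.log (Af α u)) (Af α u - 1), mul_div_mul_left _ _ hd]

lemma tendsto_ratio (hα : 1 < α) {c : ℝ} (hc0 : 0 < c) (hc1 : c < 1) :
    Tendsto (fun t => Real.log (Af α (c*t)) / Real.log (Af α t)) (𝓝[>] (0:ℝ))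
      (𝓝 (c^2)) := by
  set L := 2*α*(α-1) with hL
  have hLpos : 0 < L := by nlinarith
  have hmul : Tendsto (fun t : ℝ => c*t) (𝓝[>] (0:ℝ)) (𝓝[>] (0:ℝ)) := by
    apply tendsto_nhdsWithin_of_tendsto_nhds_of_eventually_within
    · have : Tendsto (fun t : ℝ => c*t) (𝓝 0) (𝓝 (c*0)) :=
        (continuous_const.mul continuous_id).tendsto 0
      simpa using this.mono_left nhdsWithin_le_nhds
    · filter_upwards [self_mem_nhdsWithin] with t ht
      exact mul_pos hc0 ht
  have h1 : Tendsto (fun t => Real.log (Af α (c*t)) / (c*t)^2) (𝓝[>] (0:ℝ)) (𝓝 L) :=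
    (tendsto_logA hα).comp hmul
  have h1' : Tendsto (fun t => Real.log (Af α (c*t)) / t^2) (𝓝[>] (0:ℝ)) (𝓝 (L * c^2)) := by
    refine (h1.mul_const (c^2)).congr (fun t => ?_)
    rw [mul_pow, div_mul_eq_mul_div, mul_comm (Real.log (Af α (c*t))) (c^2),
      mul_div_mul_left _ _ (pow_ne_zero 2 hc0.ne')]
  have h3 := h1'.div (tendsto_logA hα) hLpos.ne'
  have hval : L * c^2 / L = c^2 := by
    rw [mul_comm, mul_div_assoc, div_self hLpos.ne', mul_one]
  rw [hval] at h3
  refine Filter.Tendsto.congr' ?_ h3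
  filter_upwards [self_mem_nhdsWithin] with t ht
  have : (0:ℝ) < t := ht
  show (fun t => Real.log (Af α (c*t)) / t^2) t / ((fun u => Real.log (Af α u) / u^2) t)
      = Real.log (Af α (c*t)) / Real.log (Af α t)
  simp only []
  rw [div_div_div_comm, div_self (pow_ne_zero 2 this.ne'), div_one]

end SDPIAux

open SDPIAux


lemma renyi_comp (α t : ℝ) (ν : Fin 2 → ℝ) (h0 : ν 0 = 1/2 + t) (h1 : ν 1 = 1/2 - t) :
    renyiD α ν (fun _ => (1:ℝ)/2) = (α-1)⁻¹ * Real.log (Af α t) := by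
  unfold renyiD Af
  rw [Fin.sum_univ_two]
  simp only [h0, h1]
  rw [show (1/2 + t)/((1:ℝ)/2) = 1 + 2*t by ring, show (1/2 - t)/((1:ℝ)/2) = 1 - 2*t by ring]
  congr 2
  ring

lemma push_comp (ε t : ℝ) (ν : Fin 2 → ℝ) (h0 : ν 0 = 1/2 + t) (h1 : ν 1 = 1/2 - t) :
    push ν (fun i j : Fin 2 => if i = j then 1-ε else ε)
      = fun j : Fin 2 => if j = 0 then 1/2 + (1-2*ε)*t else 1/2 - (1-2*ε)*t := by
  funext j
  fin_cases j <;>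
    simp [push, Fin.sum_univ_two, h0, h1, show (1:Fin 2) ≠ 0 from by decide] <;> ring

lemma pushμ_comp (ε : ℝ) :
    push (fun _ : Fin 2 => (1:ℝ)/2) (fun i j : Fin 2 => if i = j then 1-ε else ε)
      = fun _ : Fin 2 => (1:ℝ)/2 := by
  funext j
  fin_cases j <;>
    simp [push, Fin.sum_univ_two, show (1:Fin 2) ≠ 0 from by decide] <;> ring

lemma ratio_eq (α ε t : ℝ) (hα : 1 < α) (ν : Fin 2 → ℝ)
    (h0 : ν 0 = 1/2 + t) (h1 : ν 1 = 1/2 - t) :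
    renyiD α (push ν (fun i j : Fin 2 => if i = j then 1-ε else ε))
        (push (fun _ : Fin 2 => (1:ℝ)/2) (fun i j : Fin 2 => if i = j then 1-ε else ε)) /
      renyiD α ν (fun _ : Fin 2 => (1:ℝ)/2)
    = Real.log (Af α ((1-2*ε)*t)) / Real.log (Af α t) := by
  rw [pushμ_comp, push_comp ε t ν h0 h1]
  rw [renyi_comp α ((1-2*ε)*t) _ (by norm_num) (by norm_num),
    renyi_comp α t ν h0 h1]
  have hne : (α - 1)⁻¹ ≠ 0 := inv_ne_zero (sub_ne_zero.mpr hα.ne')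
  rw [mul_div_mul_left _ _ hne]


end Aux

open SDPIAux Real Filter Set Topology in
/-- Example 1: for `μ = Ber(1/2)` and `K = BSC(ε)` with `0 < ε < 1/2`,
`η_α(μ, K) ≥ (1 - 2ε)²` for every `1 < α < ∞`. -/
theorem sdpi_renyi_uniform_bsc_lower_bound
    (ε : ℝ) (hε0 : 0 < ε) (hε : ε < 1 / 2) (α : ℝ) (hα : 1 < α) :
    (1 - 2 * ε) ^ 2 ≤
      etaAlpha α (fun _ : Fin 2 => (1 : ℝ) / 2)
        (fun i j : Fin 2 => if i = j then 1 - ε else ε) := by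
  have hc0 : 0 < 1 - 2*ε := by linarith
  have hc1 : 1 - 2*ε < 1 := by linarith
  unfold etaAlpha
  set S : Set ℝ := {r : ℝ | ∃ ν : Fin 2 → ℝ, IsProbDist ν ∧ ν ≠ (fun _ : Fin 2 => (1:ℝ)/2) ∧
    r = renyiD α (push ν (fun i j : Fin 2 => if i = j then 1-ε else ε))
        (push (fun _ : Fin 2 => (1:ℝ)/2) (fun i j : Fin 2 => if i = j then 1-ε else ε)) /
      renyiD α ν (fun _ : Fin 2 => (1:ℝ)/2)} with hS
  have hbdd : BddAbove S := by
    refine ⟨1, ?_⟩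
    rintro r ⟨ν, ⟨hnn, hsum⟩, hne, rfl⟩
    have hsum2 : ν 0 + ν 1 = 1 := by simpa [Fin.sum_univ_two] using hsum
    set t : ℝ := ν 0 - 1/2 with ht
    have h0 : ν 0 = 1/2 + t := by rw [ht]; ring
    have h1 : ν 1 = 1/2 - t := by rw [ht]; linarith
    have ht2 : t ≤ 1/2 := by have := hnn 1; rw [h1] at this; linarith
    have ht0 : t ≠ 0 := by
      intro h
      apply hne
      funext i
      fin_cases i <;> simp [h0, h1, h]
    rw [ratio_eq α ε t hα ν h0 h1]
    have habs1 : Af α ((1-2*ε)*t) = Af α ((1-2*ε)*|t|) := by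
      rcases abs_cases t with ⟨h, _⟩ | ⟨h, _⟩
      · rw [h]
      · rw [h, show (1-2*ε)*(-t) = -((1-2*ε)*t) by ring, Af_even]
    have habs2 : Af α t = Af α |t| := by
      rcases abs_cases t with ⟨h, _⟩ | ⟨h, _⟩
      · rw [h]
      · rw [h, Af_even]
    have hts : |t| ∈ Ioc (0:ℝ) (1/2) := ⟨abs_pos.mpr ht0, abs_le.mpr ⟨by linarith [hnn 0, h0], ht2⟩ ⟩
    have hcs : (1-2*ε)*|t| ∈ Icc (0:ℝ) (1/2) := by
      constructor
      · exact mul_nonneg hc0.le (abs_nonneg t)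
      · calc (1-2*ε)*|t| ≤ 1*|t| := mul_le_mul_of_nonneg_right hc1.le (abs_nonneg t)
          _ ≤ 1/2 := by rw [one_mul]; exact hts.2
    have hA2 : 1 < Af α |t| := Af_one_lt hα hts
    have hA1 : 1 ≤ Af α ((1-2*ε)*|t|) := Af_one_le hα hcs
    have hle : Af α ((1-2*ε)*|t|) ≤ Af α |t| := by
      apply (Af_strictMonoOn hα).monotoneOn hcs ⟨hts.1.le, hts.2⟩
      calc (1-2*ε)*|t| ≤ 1*|t| := mul_le_mul_of_nonneg_right hc1.le (abs_nonneg t)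
        _ = |t| := one_mul _
    rw [habs1, habs2]
    rw [div_le_one (Real.log_pos hA2)]
    exact Real.log_le_log (by linarith) hle
  have hev : ∀ᶠ t in 𝓝[>] (0:ℝ),
      Real.log (Af α ((1-2*ε)*t)) / Real.log (Af α t) ≤ sSup S := by
    filter_upwards [Ioo_mem_nhdsGT_of_mem (by norm_num : (0:ℝ) ∈ Ico 0 (1/2))] with t htt
    apply le_csSup hbdd
    refine ⟨fun i : Fin 2 => if i = 0 then 1/2 + t else 1/2 - t, ?_, ?_, ?_⟩
    · constructor
      · intro i
        fin_cases i <;> simp <;> [linarith [htt.1]; linarith [htt.2]]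
      · rw [Fin.sum_univ_two]
        simp [show (1:Fin 2) ≠ 0 from by decide]
        ring
    · intro h
      have := congrFun h 0
      simp at this
      linarith [htt.1]
    · exact (ratio_eq α ε t hα _ (by simp) (by simp [show (1:Fin 2) ≠ 0 from by decide])).symm
  exact le_of_tendsto (tendsto_ratio hα hc0 hc1) hev
end
end
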